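/- arXiv:1702.07250 — 4 statements merged into one kernel-verified Lean document; each statement's English description precedes it below -/
import Mathlib

section
/- Let (𝒜⁽ⁿ⁾, τ⁽ⁿ⁾) for n ∈ ℕ and (𝒜, τ) be unital C*-algebras equipped with faithful tracial states, let x⁽ⁿ⁾ = (x₁⁽ⁿ⁾, …, x_m⁽ⁿ⁾) be a tuple in 𝒜⁽ⁿ⁾ for each n, and let x = (x₁, …, x_m) be a tuple in 𝒜 such that x⁽ⁿ⁾ strongly converges to x. Let r be a rational expression in 2m variables such that the tuple (x, x*) = (x₁, …, x_m, x₁*, …, x_m*) lies in the domain of r in 𝒜. Then there exists N ∈ ℕ such that for all n > N the tuple (x⁽ⁿ⁾, (x⁽ⁿ⁾)*) lies in the domain of r in 𝒜⁽ⁿ⁾. -/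
open Filter Topology

/-- A non-commutative rational expression in variables indexed by `σ`:
the inductive syntax generated by complex scalars and formal variables,
closed under addition, multiplication and formal inverse. -/
inductive RatExpr (σ : Type*) : Type _
  | scalar : ℂ → RatExpr σ
  | var : σ → RatExpr σ
  | add : RatExpr σ → RatExpr σ → RatExpr σ
  | mul : RatExpr σ → RatExpr σ → RatExpr σ
  | inv : RatExpr σ → RatExpr σ

open Classical in
/-- Partial evaluation of a rational expression at a tuple `a` in a unital complex
algebra.  A formal inverse evaluates exactly when its operand evaluates to an
invertible element, and then its value is that inverse. -/
noncomputable def RatExpr.eval? {σ : Type*} {B : Type*} [Ring B] [Algebra ℂ B]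
    (a : σ → B) : RatExpr σ → Option B
  | .scalar c => some (algebraMap ℂ B c)
  | .var i => some (a i)
  | .add r s => do return (← r.eval? a) + (← s.eval? a)
  | .mul r s => do return (← r.eval? a) * (← s.eval? a)
  | .inv r => (r.eval? a).bind fun b => if IsUnit b then some (Ring.inverse b) else none

/-- `a` lies in the domain of the rational expression `r`. -/
def RatExpr.InDomain {σ : Type*} {B : Type*} [Ring B] [Algebra ℂ B]
    (r : RatExpr σ) (a : σ → B) : Prop := (r.eval? a).isSome

/-- The evaluation of a rational expression (defaulting to `0` off the domain). -/
noncomputable def RatExpr.eval {σ : Type*} {B : Type*} [Ring B] [Algebra ℂ B]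
    (r : RatExpr σ) (a : σ → B) : B := (r.eval? a).getD 0

/-- The tuple `(x₁, …, x_m, x₁*, …, x_m*)` built from the `m`-tuple `x`. -/
def starTuple {m : ℕ} {A : Type*} [Star A] (x : Fin m → A) : (Fin m ⊕ Fin m) → A :=
  Sum.elim x (fun i => star (x i))

/-- `τ` is a faithful tracial state on the unital C⋆-algebra `A`:
a linear functional with `τ 1 = 1`, `τ (a* a) ≥ 0`, `τ (a b) = τ (b a)`, and
`τ (a* a) = 0 → a = 0`. -/
structure IsFaithfulTracialState (A : Type*) [CStarAlgebra A] (τ : A → ℂ) : Prop where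
  map_add : ∀ a b, τ (a + b) = τ a + τ b
  map_smul : ∀ (c : ℂ) a, τ (c • a) = c * τ a
  map_one : τ 1 = 1
  nonneg_re : ∀ a, 0 ≤ (τ (star a * a)).re
  im_eq_zero : ∀ a, (τ (star a * a)).im = 0
  tracial : ∀ a b, τ (a * b) = τ (b * a)
  faithful : ∀ a, τ (star a * a) = 0 → a = 0

/-- Strong convergence of a sequence of `m`-tuples `x n` in C⋆-probability spaces
`(A n, τ' n)` to the tuple `y` in `(B, τ)`: convergence in trace and in norm of all
noncommutative `*`-polynomials, i.e. of all elements of the free algebra on `2m`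
generators evaluated at `(x, x*)` resp. `(y, y*)`. -/
def StronglyConverges {m : ℕ} {A : ℕ → Type*} [∀ n, CStarAlgebra (A n)]
    {B : Type*} [CStarAlgebra B]
    (τ' : ∀ n, A n → ℂ) (τ : B → ℂ)
    (x : ∀ n, Fin m → A n) (y : Fin m → B) : Prop :=
  ∀ p : FreeAlgebra ℂ (Fin m ⊕ Fin m),
    Tendsto (fun n => τ' n (FreeAlgebra.lift ℂ (starTuple (x n)) p)) atTop
      (𝓝 (τ (FreeAlgebra.lift ℂ (starTuple y) p))) ∧
    Tendsto (fun n => ‖FreeAlgebra.lift ℂ (starTuple (x n)) p‖) atTop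
      (𝓝 ‖FreeAlgebra.lift ℂ (starTuple y) p‖)

/-!
Call a sequence `sₙ ∈ A n` and an element `t ∈ B` *polynomially approximable* if for every
`ε > 0` a single noncommutative polynomial `p` in the generators satisfies `‖p(y) - t‖ ≤ ε` and
`‖p(xⁿ) - sₙ‖ ≤ ε` for all large `n`. Norm convergence of polynomials gives
`limsup ‖sₙ‖ ≤ ‖t‖` for such pairs, which makes them closed under sums and products.
For an inverse, `t⁻¹` lies in the C⋆-algebra generated by `y` (spectral permanence), so some
polynomial `c` has `c(y)` close to `t⁻¹`; then `1 - c(xⁿ) sₙ` and `1 - sₙ c(xⁿ)` are eventually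
small, so `sₙ` is invertible by a Neumann series and `sₙ⁻¹` is close to `c(xⁿ)`.
Induction on `r` then shows that `(r(xⁿ, xⁿ*), r(y, y*))` is eventually defined and
polynomially approximable.
-/

namespace RatExpr

variable {σ B : Type*} [Ring B] [Algebra ℂ B] {r s : RatExpr σ} {a : σ → B}

theorem InDomain.eval?_eq (h : r.InDomain a) : r.eval? a = some (r.eval a) := by
  obtain ⟨v, hv⟩ := Option.isSome_iff_exists.1 h
  simp [RatExpr.eval, hv]

theorem inDomain_scalar (c : ℂ) : (scalar c : RatExpr σ).InDomain a := by
  simp [InDomain, eval?]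

theorem eval_scalar (c : ℂ) : (scalar c : RatExpr σ).eval a = algebraMap ℂ B c := rfl

theorem inDomain_var (i : σ) : (var i).InDomain a := by
  simp [InDomain, eval?]

theorem eval_var (i : σ) : (var i).eval a = a i := rfl

theorem inDomain_add_iff : (add r s).InDomain a ↔ r.InDomain a ∧ s.InDomain a := by
  simp only [InDomain, eval?]
  cases r.eval? a <;> cases s.eval? a <;> simp

theorem eval_add (hr : r.InDomain a) (hs : s.InDomain a) :
    (add r s).eval a = r.eval a + s.eval a := by
  rw [eval, eval?, hr.eval?_eq, hs.eval?_eq]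
  rfl

theorem inDomain_mul_iff : (mul r s).InDomain a ↔ r.InDomain a ∧ s.InDomain a := by
  simp only [InDomain, eval?]
  cases r.eval? a <;> cases s.eval? a <;> simp

theorem eval_mul (hr : r.InDomain a) (hs : s.InDomain a) :
    (mul r s).eval a = r.eval a * s.eval a := by
  rw [eval, eval?, hr.eval?_eq, hs.eval?_eq]
  rfl

theorem inDomain_inv_iff : (inv r).InDomain a ↔ r.InDomain a ∧ IsUnit (r.eval a) := by
  simp only [InDomain, eval?, eval]
  cases r.eval? a with
  | none => simp
  | some v => by_cases hv : IsUnit v <;> simp [hv]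

theorem eval_inv : (inv r).eval a = Ring.inverse (r.eval a) := by
  simp only [eval, eval?]
  cases r.eval? a with
  | none => simp
  | some v => by_cases hv : IsUnit v <;> simp [hv, Ring.inverse_non_unit]

end RatExpr

section NormedRing

variable {R : Type*} [NormedRing R]

theorem norm_mul_sub_mul_le (x x' y y' : R) :
    ‖x * y - x' * y'‖ ≤ ‖x - x'‖ * ‖y‖ + ‖x'‖ * ‖y - y'‖ :=
  calc ‖x * y - x' * y'‖ = ‖(x - x') * y + x' * (y - y')‖ := by noncomm_ring
    _ ≤ ‖x - x'‖ * ‖y‖ + ‖x'‖ * ‖y - y'‖ :=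
      (norm_add_le _ _).trans (add_le_add (norm_mul_le _ _) (norm_mul_le _ _))

theorem isUnit_of_norm_one_sub_mul_lt_one [HasSummableGeomSeries R] {a c : R}
    (h₁ : ‖1 - c * a‖ < 1) (h₂ : ‖1 - a * c‖ < 1) : IsUnit a := by
  obtain ⟨d, hd⟩ := (sub_sub_cancel 1 (c * a) ▸ isUnit_one_sub_of_norm_lt_one h₁).exists_left_inv
  obtain ⟨e, he⟩ := (sub_sub_cancel 1 (a * c) ▸ isUnit_one_sub_of_norm_lt_one h₂).exists_right_inv
  exact isUnit_iff_exists_and_exists.2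
    ⟨⟨c * e, by rw [← mul_assoc, he]⟩, ⟨d * c, by rw [mul_assoc, hd]⟩⟩

theorem norm_sub_inverse_le {a c : R} (ha : IsUnit a) (h : ‖1 - c * a‖ ≤ 1 / 2) :
    ‖c - Ring.inverse a‖ ≤ 2 * ‖c‖ * ‖1 - a * c‖ := by
  have hinv : Ring.inverse a = c + (1 - c * a) * Ring.inverse a := by
    rw [sub_mul, one_mul, mul_assoc, Ring.mul_inverse_cancel a ha, mul_one, add_sub_cancel]
  have hbound : ‖Ring.inverse a‖ ≤ 2 * ‖c‖ := by
    have : ‖Ring.inverse a‖ ≤ ‖c‖ + 1 / 2 * ‖Ring.inverse a‖ :=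
      calc ‖Ring.inverse a‖ ≤ ‖c‖ + ‖1 - c * a‖ * ‖Ring.inverse a‖ := by
            conv_lhs => rw [hinv]
            exact (norm_add_le _ _).trans (by gcongr; exact norm_mul_le _ _)
        _ ≤ ‖c‖ + 1 / 2 * ‖Ring.inverse a‖ := by gcongr
    linarith
  calc ‖c - Ring.inverse a‖ = ‖Ring.inverse a * (1 - a * c)‖ := by
        rw [mul_sub, mul_one, ← mul_assoc, Ring.inverse_mul_cancel a ha, one_mul, norm_sub_rev]
    _ ≤ ‖Ring.inverse a‖ * ‖1 - a * c‖ := norm_mul_le _ _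
    _ ≤ 2 * ‖c‖ * ‖1 - a * c‖ := by gcongr

end NormedRing

section NormedAlgebra

variable {σ : Type*} {A : ℕ → Type*} [∀ n, NormedRing (A n)] [∀ n, NormedAlgebra ℂ (A n)]
  {B : Type*} [NormedRing B] [NormedAlgebra ℂ B] {a : ∀ n, σ → A n} {b : σ → B}
  {s s' : ∀ n, A n} {t t' : B}

def PolyNormsConverge (a : ∀ n, σ → A n) (b : σ → B) : Prop :=
  ∀ p : FreeAlgebra ℂ σ,
    Tendsto (fun n => ‖FreeAlgebra.lift ℂ (a n) p‖) atTop (𝓝 ‖FreeAlgebra.lift ℂ b p‖)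

def PolyApprox (a : ∀ n, σ → A n) (b : σ → B) (s : ∀ n, A n) (t : B) : Prop :=
  ∀ ε > 0, ∃ p : FreeAlgebra ℂ σ, ‖FreeAlgebra.lift ℂ b p - t‖ ≤ ε ∧
    ∀ᶠ n in atTop, ‖FreeAlgebra.lift ℂ (a n) p - s n‖ ≤ ε

namespace PolyApprox

theorem of_eventually_le_mul (K : ℝ)
    (h : ∀ᶠ δ in 𝓝[>] (0 : ℝ), ∃ p : FreeAlgebra ℂ σ, ‖FreeAlgebra.lift ℂ b p - t‖ ≤ K * δ ∧
      ∀ᶠ n in atTop, ‖FreeAlgebra.lift ℂ (a n) p - s n‖ ≤ K * δ) :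
    PolyApprox a b s t := by
  intro ε hε
  have hK : ∀ᶠ δ in 𝓝[>] (0 : ℝ), K * δ ≤ ε := by
    have : Tendsto (fun δ : ℝ => K * δ) (𝓝[>] 0) (𝓝 0) := by
      simpa using tendsto_nhdsWithin_of_tendsto_nhds ((continuous_const_mul K).tendsto 0)
    exact this.eventually (eventually_le_nhds hε)
  obtain ⟨δ, ⟨p, hpb, hpa⟩, hδ⟩ := (h.and hK).exists
  exact ⟨p, hpb.trans hδ, hpa.mono fun n hn => hn.trans hδ⟩

theorem lift (p : FreeAlgebra ℂ σ) :
    PolyApprox a b (fun n => FreeAlgebra.lift ℂ (a n) p) (FreeAlgebra.lift ℂ b p) :=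
  fun ε hε => ⟨p, by simpa using hε.le, .of_forall fun n => by simpa using hε.le⟩

theorem congr (h : PolyApprox a b s t) (hs : ∀ᶠ n in atTop, s n = s' n) :
    PolyApprox a b s' t := by
  intro ε hε
  obtain ⟨p, hpb, hpa⟩ := h ε hε
  exact ⟨p, hpb, by filter_upwards [hpa, hs] with n hn hsn; rwa [← hsn]⟩

theorem add (h : PolyApprox a b s t) (h' : PolyApprox a b s' t') :
    PolyApprox a b (fun n => s n + s' n) (t + t') := by
  refine of_eventually_le_mul 2 ?_
  filter_upwards [self_mem_nhdsWithin] with δ (hδ : 0 < δ)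
  obtain ⟨p, hpb, hpa⟩ := h δ hδ
  obtain ⟨q, hqb, hqa⟩ := h' δ hδ
  refine ⟨p + q, ?_, ?_⟩
  · rw [map_add, add_sub_add_comm]
    exact (norm_add_le _ _).trans (by linarith)
  · filter_upwards [hpa, hqa] with n hpn hqn
    rw [map_add, add_sub_add_comm]
    exact (norm_add_le _ _).trans (by linarith)

theorem sub (h : PolyApprox a b s t) (h' : PolyApprox a b s' t') :
    PolyApprox a b (fun n => s n - s' n) (t - t') := by
  refine of_eventually_le_mul 2 ?_
  filter_upwards [self_mem_nhdsWithin] with δ (hδ : 0 < δ)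
  obtain ⟨p, hpb, hpa⟩ := h δ hδ
  obtain ⟨q, hqb, hqa⟩ := h' δ hδ
  refine ⟨p - q, ?_, ?_⟩
  · rw [map_sub, sub_sub_sub_comm]
    exact (norm_sub_le _ _).trans (by linarith)
  · filter_upwards [hpa, hqa] with n hpn hqn
    rw [map_sub, sub_sub_sub_comm]
    exact (norm_sub_le _ _).trans (by linarith)

theorem eventually_norm_le (hnorm : PolyNormsConverge a b) (h : PolyApprox a b s t) {ε : ℝ}
    (hε : 0 < ε) :
    ∀ᶠ n in atTop, ‖s n‖ ≤ ‖t‖ + ε := by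
  obtain ⟨p, hpb, hpa⟩ := h (ε / 3) (by positivity)
  have hp : ∀ᶠ n in atTop, ‖FreeAlgebra.lift ℂ (a n) p‖ ≤ ‖FreeAlgebra.lift ℂ b p‖ + ε / 3 :=
    (hnorm p).eventually (eventually_le_nhds (by linarith))
  filter_upwards [hpa, hp] with n hpn hn
  linarith [norm_le_norm_add_norm_sub (FreeAlgebra.lift ℂ (a n) p) (s n),
    norm_le_norm_add_norm_sub' (FreeAlgebra.lift ℂ b p) t]

theorem mul (hnorm : PolyNormsConverge a b) (h : PolyApprox a b s t)
    (h' : PolyApprox a b s' t') : PolyApprox a b (fun n => s n * s' n) (t * t') := by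
  set M := ‖t‖ + ‖t'‖ + 2 with hM
  refine of_eventually_le_mul (2 * M) ?_
  filter_upwards [Ioc_mem_nhdsGT one_pos] with δ ⟨hδ, hδ1⟩
  obtain ⟨p, hpb, hpa⟩ := h δ hδ
  obtain ⟨q, hqb, hqa⟩ := h' δ hδ
  have hq : ‖FreeAlgebra.lift ℂ b q‖ ≤ ‖t'‖ + 1 := by
    linarith [norm_le_norm_add_norm_sub' (FreeAlgebra.lift ℂ b q) t']
  refine ⟨p * q, ?_, ?_⟩
  · rw [map_mul]
    refine (norm_mul_sub_mul_le _ _ _ _).trans ?_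
    calc _ ≤ δ * M + M * δ := by gcongr <;> linarith [norm_nonneg t, norm_nonneg t', hM]
      _ = 2 * M * δ := by ring
  · filter_upwards [hpa, hqa, h.eventually_norm_le hnorm one_pos,
      (PolyApprox.lift q).eventually_norm_le hnorm one_pos] with n hpn hqn hsn hqn'
    rw [map_mul]
    refine (norm_mul_sub_mul_le _ _ _ _).trans ?_
    calc _ ≤ δ * M + M * δ := by gcongr <;> linarith [norm_nonneg t, norm_nonneg t', hM]
      _ = 2 * M * δ := by ring

theorem eventually_isUnit_and_norm_sub_inverse_le [∀ n, CompleteSpace (A n)]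
    (hnorm : PolyNormsConverge a b) (h : PolyApprox a b s t) (ht : IsUnit t)
    {c : FreeAlgebra ℂ σ} {δ : ℝ} (hδ : 0 < δ)
    (hc : ‖FreeAlgebra.lift ℂ b c - Ring.inverse t‖ ≤ δ) (hδt : (‖t‖ + 1) * δ ≤ 1 / 2) :
    ∀ᶠ n in atTop, IsUnit (s n) ∧ ‖FreeAlgebra.lift ℂ (a n) c - Ring.inverse (s n)‖ ≤
      2 * (‖Ring.inverse t‖ + 2) * ((‖t‖ + 1) * δ) := by
  set c₀ := FreeAlgebra.lift ℂ b c
  have hct : ‖1 - c₀ * t‖ ≤ ‖t‖ * δ :=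
    calc ‖1 - c₀ * t‖ = ‖(Ring.inverse t - c₀) * t‖ := by
          rw [sub_mul, Ring.inverse_mul_cancel t ht]
      _ ≤ ‖t‖ * δ := (norm_mul_le _ _).trans (by rw [norm_sub_rev, mul_comm]; gcongr)
  have htc : ‖1 - t * c₀‖ ≤ ‖t‖ * δ :=
    calc ‖1 - t * c₀‖ = ‖t * (Ring.inverse t - c₀)‖ := by
          rw [mul_sub, Ring.mul_inverse_cancel t ht]
      _ ≤ ‖t‖ * δ := (norm_mul_le _ _).trans (by rw [norm_sub_rev]; gcongr)
  have hc₀ : ‖c₀‖ ≤ ‖Ring.inverse t‖ + 1 := by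
    nlinarith [norm_le_norm_add_norm_sub' c₀ (Ring.inverse t), norm_nonneg t]
  have hleft := ((PolyApprox.lift 1).sub ((PolyApprox.lift c).mul hnorm h)).eventually_norm_le
    hnorm hδ
  have hright := ((PolyApprox.lift 1).sub (h.mul hnorm (PolyApprox.lift c))).eventually_norm_le
    hnorm hδ
  simp only [map_one] at hleft hright
  filter_upwards [hleft, hright, (PolyApprox.lift c).eventually_norm_le hnorm one_pos]
    with n hl hr hcn
  have hl' : ‖1 - FreeAlgebra.lift ℂ (a n) c * s n‖ ≤ 1 / 2 := by linarith
  have hunit : IsUnit (s n) := isUnit_of_norm_one_sub_mul_lt_one (by linarith) (by linarith)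
  refine ⟨hunit, (norm_sub_inverse_le hunit hl').trans ?_⟩
  gcongr <;> linarith

end PolyApprox

end NormedAlgebra

section CStarAlgebra

variable {σ : Type*} {A : ℕ → Type*} [∀ n, NormedRing (A n)] [∀ n, NormedAlgebra ℂ (A n)]
  [∀ n, CompleteSpace (A n)] {B : Type*} [CStarAlgebra B] {a : ∀ n, σ → A n} {b : σ → B}

theorem StarSubalgebra.ring_inverse_mem (S : StarSubalgebra ℂ B) [IsClosed (S : Set B)] {t : B}
    (ht : t ∈ S) : Ring.inverse t ∈ S := by
  by_cases hu : IsUnit t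
  · obtain ⟨u, hu⟩ := (S.coe_isUnit (a := ⟨t, ht⟩)).1 hu
    have ht' : t = (Units.map S.subtype.toMonoidHom u : B) := by simp [hu]
    rw [ht', Ring.inverse_unit]
    exact (u⁻¹ : Sˣ).val.2
  · rw [Ring.inverse_non_unit t hu]
    exact zero_mem S

theorem ring_inverse_mem_closure_range_lift
    (hb : ∀ i, star (b i) ∈ Set.range b) {t : B}
    (ht : t ∈ closure (Set.range (FreeAlgebra.lift ℂ b))) :
    Ring.inverse t ∈ closure (Set.range (FreeAlgebra.lift ℂ b)) := by
  have hstar : star (Set.range b) ⊆ Set.range b := fun z ⟨i, hi⟩ => star_star z ▸ hi ▸ hb i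
  have hS : (StarAlgebra.adjoin ℂ (Set.range b) : Set B) = Set.range (FreeAlgebra.lift ℂ b) := by
    rw [← StarSubalgebra.coe_toSubalgebra, StarAlgebra.adjoin_toSubalgebra,
      Set.union_eq_left.2 hstar, Algebra.adjoin_range_eq_range_freeAlgebra_lift]
    rfl
  rw [← hS, ← StarSubalgebra.topologicalClosure_coe] at ht ⊢
  have := (StarAlgebra.adjoin ℂ (Set.range b)).isClosed_topologicalClosure
  exact StarSubalgebra.ring_inverse_mem _ ht

theorem PolyApprox.inverse (hnorm : PolyNormsConverge a b)
    (hb : ∀ i, star (b i) ∈ Set.range b) {s : ∀ n, A n} {t : B}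
    (h : PolyApprox a b s t) (ht : IsUnit t) :
    (∀ᶠ n in atTop, IsUnit (s n)) ∧
      PolyApprox a b (fun n => Ring.inverse (s n)) (Ring.inverse t) := by
  have hmem : t ∈ closure (Set.range (FreeAlgebra.lift ℂ b)) := by
    refine Metric.mem_closure_iff.2 fun ε hε => ?_
    obtain ⟨p, hp, -⟩ := h (ε / 2) (by positivity)
    exact ⟨_, ⟨p, rfl⟩, by rw [dist_eq_norm, norm_sub_rev]; linarith⟩
  have happrox : ∀ δ > 0, ∃ c, ‖FreeAlgebra.lift ℂ b c - Ring.inverse t‖ ≤ δ := by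
    intro δ hδ
    obtain ⟨_, ⟨c, rfl⟩, hc⟩ :=
      Metric.mem_closure_iff.1 (ring_inverse_mem_closure_range_lift hb hmem) δ hδ
    exact ⟨c, by rw [dist_eq_norm, norm_sub_rev] at hc; exact hc.le⟩
  set δ₀ := 1 / (2 * (‖t‖ + 1)) with hδ₀
  have hδ₀pos : 0 < δ₀ := by positivity
  have hδ₀t : (‖t‖ + 1) * δ₀ = 1 / 2 := by
    rw [hδ₀]
    field_simp
  constructor
  · obtain ⟨c, hc⟩ := happrox δ₀ hδ₀pos
    exact (h.eventually_isUnit_and_norm_sub_inverse_le hnorm ht hδ₀pos hc hδ₀t.le).mono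
      fun n hn => hn.1
  · refine .of_eventually_le_mul (2 * (‖Ring.inverse t‖ + 2) * (‖t‖ + 1)) ?_
    filter_upwards [Ioc_mem_nhdsGT hδ₀pos] with δ ⟨hδ, hδδ₀⟩
    obtain ⟨c, hc⟩ := happrox δ hδ
    have hδt : (‖t‖ + 1) * δ ≤ 1 / 2 :=
      (by gcongr : (‖t‖ + 1) * δ ≤ (‖t‖ + 1) * δ₀).trans hδ₀t.le
    refine ⟨c, hc.trans ?_, ?_⟩
    · exact le_mul_of_one_le_left hδ.le
        (by nlinarith [norm_nonneg t, norm_nonneg (Ring.inverse t)])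
    · exact (h.eventually_isUnit_and_norm_sub_inverse_le hnorm ht hδ hc hδt).mono
        fun n hn => hn.2.trans_eq (by ring)

theorem RatExpr.eventually_inDomain_and_polyApprox (hnorm : PolyNormsConverge a b)
    (hb : ∀ i, star (b i) ∈ Set.range b) {r : RatExpr σ} (hr : r.InDomain b) :
    (∀ᶠ n in atTop, r.InDomain (a n)) ∧
      PolyApprox a b (fun n => r.eval (a n)) (r.eval b) := by
  induction r with
  | scalar c =>
    refine ⟨.of_forall fun n => inDomain_scalar c, ?_⟩
    simpa only [eval_scalar, AlgHom.commutes] using PolyApprox.lift (algebraMap ℂ _ c)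
  | var i =>
    refine ⟨.of_forall fun n => inDomain_var i, ?_⟩
    simpa only [eval_var, FreeAlgebra.lift_ι_apply] using PolyApprox.lift (FreeAlgebra.ι ℂ i)
  | add r s ihr ihs =>
    obtain ⟨hr, hs⟩ := inDomain_add_iff.1 hr
    obtain ⟨hra, hr'⟩ := ihr hr
    obtain ⟨hsa, hs'⟩ := ihs hs
    refine ⟨(hra.and hsa).mono fun n hn => inDomain_add_iff.2 hn, ?_⟩
    rw [eval_add hr hs]
    exact (hr'.add hs').congr ((hra.and hsa).mono fun n hn => (eval_add hn.1 hn.2).symm)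
  | mul r s ihr ihs =>
    obtain ⟨hr, hs⟩ := inDomain_mul_iff.1 hr
    obtain ⟨hra, hr'⟩ := ihr hr
    obtain ⟨hsa, hs'⟩ := ihs hs
    refine ⟨(hra.and hsa).mono fun n hn => inDomain_mul_iff.2 hn, ?_⟩
    rw [eval_mul hr hs]
    exact (hr'.mul hnorm hs').congr ((hra.and hsa).mono fun n hn => (eval_mul hn.1 hn.2).symm)
  | inv r ih =>
    obtain ⟨hr, hu⟩ := inDomain_inv_iff.1 hr
    obtain ⟨hra, hr'⟩ := ih hr
    obtain ⟨hunit, hinv⟩ := hr'.inverse hnorm hb hu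
    refine ⟨(hra.and hunit).mono fun n hn => inDomain_inv_iff.2 hn, ?_⟩
    simpa only [eval_inv] using hinv

end CStarAlgebra

theorem stmt2_general {m : ℕ} {A : ℕ → Type*} [∀ n, CStarAlgebra (A n)]
    {B : Type*} [CStarAlgebra B]
    (τ' : ∀ n, A n → ℂ) (τ : B → ℂ)
    (x : ∀ n, Fin m → A n) (y : Fin m → B)
    (hconv : StronglyConverges τ' τ x y)
    (r : RatExpr (Fin m ⊕ Fin m))
    (hdom : r.InDomain (starTuple y)) :
    ∃ N : ℕ, ∀ n > N, r.InDomain (starTuple (x n)) := by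
  have hstar : ∀ i, star (starTuple y i) ∈ Set.range (starTuple y) := by
    rintro (i | i)
    exacts [⟨Sum.inr i, rfl⟩, ⟨Sum.inl i, (star_star (y i)).symm⟩]
  obtain ⟨N, hN⟩ := eventually_atTop.1
    (RatExpr.eventually_inDomain_and_polyApprox (fun p => (hconv p).2) hstar hdom).1
  exact ⟨N, fun n hn => hN n hn.le⟩

/-- If `x⁽ⁿ⁾` strongly converges to `x` and `(x, x*)` lies in the domain of the rational
expression `r`, then `(x⁽ⁿ⁾, (x⁽ⁿ⁾)*)` lies in the domain of `r` for all `n` large enough. -/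
theorem stmt2 {m : ℕ} {A : ℕ → Type*} [∀ n, CStarAlgebra (A n)]
    {B : Type*} [CStarAlgebra B]
    (τ' : ∀ n, A n → ℂ) (τ : B → ℂ)
    (hτ' : ∀ n, IsFaithfulTracialState (A n) (τ' n)) (hτ : IsFaithfulTracialState B τ)
    (x : ∀ n, Fin m → A n) (y : Fin m → B)
    (hconv : StronglyConverges τ' τ x y)
    (r : RatExpr (Fin m ⊕ Fin m))
    (hdom : r.InDomain (starTuple y)) :
    ∃ N : ℕ, ∀ n > N, r.InDomain (starTuple (x n)) :=
  stmt2_general τ' τ x y hconv r hdom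
end

section
/- Let (𝒜⁽ⁿ⁾, τ⁽ⁿ⁾) for n ∈ ℕ and (𝒜, τ) be unital C*-algebras equipped with faithful tracial states, let x⁽ⁿ⁾ = (x₁⁽ⁿ⁾, …, x_m⁽ⁿ⁾) be a tuple in 𝒜⁽ⁿ⁾ for each n, and let x = (x₁, …, x_m) be a tuple in 𝒜 such that x⁽ⁿ⁾ strongly converges to x. Let r be a rational expression in 2m variables such that (x, x*) lies in the domain of r in 𝒜. Then (x⁽ⁿ⁾, (x⁽ⁿ⁾)*) lies in the domain of r in 𝒜⁽ⁿ⁾ for all sufficiently large n, and lim_{n→∞} ‖r(x⁽ⁿ⁾, (x⁽ⁿ⁾)*)‖_{𝒜⁽ⁿ⁾} = ‖r(x, x*)‖_𝒜. -/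
open Filter Topology

section Aux
open Finset

lemma conj_algebraMap_smul {C : Type*} [CStarAlgebra C] (s : ℝ) (u : C) :
    algebraMap ℝ C s * u * algebraMap ℝ C s = (s * s) • u := by
  rw [mul_assoc, ← Algebra.commutes s u, ← mul_assoc, ← map_mul, Algebra.smul_def]

lemma smul_le_smul_cstar {C : Type*} [CStarAlgebra C] [PartialOrder C] [StarOrderedRing C]
    {a b : C} (hab : a ≤ b) {t : ℝ} (ht : 0 ≤ t) : t • a ≤ t • b := by
  have h := star_left_conjugate_le_conjugate hab (algebraMap ℝ C (Real.sqrt t))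
  have hstar : star (algebraMap ℝ C (Real.sqrt t)) = algebraMap ℝ C (Real.sqrt t) := by
    rw [← algebraMap_star_comm, star_trivial]
  rw [hstar, conj_algebraMap_smul, conj_algebraMap_smul, Real.mul_self_sqrt ht] at h
  exact h

lemma algebraMap_nonneg_cstar {C : Type*} [CStarAlgebra C] [PartialOrder C] [StarOrderedRing C]
    {r : ℝ} (hr : 0 ≤ r) : (0:C) ≤ algebraMap ℝ C r := by
  have h := star_mul_self_nonneg (algebraMap ℝ C (Real.sqrt r))
  have hstar : star (algebraMap ℝ C (Real.sqrt r)) = algebraMap ℝ C (Real.sqrt r) := by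
    rw [← algebraMap_star_comm, star_trivial]
  rwa [hstar, ← map_mul, Real.mul_self_sqrt hr] at h

lemma exists_contraction {C : Type*} [CStarAlgebra C] {w : C} (hw : IsUnit w) :
    ∃ t : ℝ, 0 < t ∧ ‖(1 : C) - t • (star w * w)‖ < 1 := by
  by_cases hnt : Nontrivial C
  · haveI := hnt
    letI := CStarAlgebra.spectralOrder C
    haveI := CStarAlgebra.spectralOrderedRing C
    set v := star w * w with hv
    have hvu : IsUnit v := (hw.star.mul hw)
    have hv0 : (0:C) ≤ v := star_mul_self_nonneg w
    have hvsa : IsSelfAdjoint v := IsSelfAdjoint.of_nonneg hv0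
    have hspec : ∀ s ∈ spectrum ℝ v, 0 < s := by
      intro s hs
      have hnn : 0 ≤ s := spectrum_nonneg_of_nonneg hv0 hs
      rcases hnn.lt_or_eq with h | h
      · exact h
      · exact absurd hvu (by rw [← h] at hs; exact spectrum.zero_mem_iff ℝ |>.mp hs)
    obtain ⟨r, hr0, hrle⟩ := (CFC.exists_pos_algebraMap_le_iff (a := v) hvsa).2 hspec
    have hvle : v ≤ algebraMap ℝ C ‖v‖ := IsSelfAdjoint.le_algebraMap_norm_self hvsa
    have hnorm_alg : ∀ s : ℝ, 0 ≤ s → ‖algebraMap ℝ C s‖ = s := by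
      intro s hs
      rw [show algebraMap ℝ C s = s • (1:C) from Algebra.algebraMap_eq_smul_one s,
        norm_smul, norm_one, Real.norm_eq_abs, abs_of_nonneg hs, mul_one]
    have hrM : r ≤ ‖v‖ := by
      have : ‖algebraMap ℝ C r‖ ≤ ‖v‖ :=
        CStarAlgebra.norm_le_norm_of_nonneg_of_le (algebraMap_nonneg_cstar hr0.le) hrle
      rwa [hnorm_alg r hr0.le] at this
    have hM0 : 0 < ‖v‖ := lt_of_lt_of_le hr0 hrM
    set M := ‖v‖ with hM
    refine ⟨M⁻¹, by positivity, ?_⟩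
    have key1 : (0:C) ≤ 1 - M⁻¹ • v := by
      have := smul_le_smul_cstar hvle (t := M⁻¹) (by positivity)
      rw [Algebra.algebraMap_eq_smul_one, smul_smul, inv_mul_cancel₀ hM0.ne', one_smul] at this
      exact sub_nonneg.mpr this
    have key2 : 1 - M⁻¹ • v ≤ algebraMap ℝ C (1 - M⁻¹ * r) := by
      have h2 := smul_le_smul_cstar hrle (t := M⁻¹) (by positivity)
      rw [Algebra.algebraMap_eq_smul_one (R := ℝ) r, smul_smul] at h2
      rw [map_sub, map_one, Algebra.algebraMap_eq_smul_one (R := ℝ) (M⁻¹ * r)]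
      exact sub_le_sub_left h2 1
    have hfin : ‖(1:C) - M⁻¹ • v‖ ≤ 1 - M⁻¹ * r := by
      have := CStarAlgebra.norm_le_norm_of_nonneg_of_le key1 key2
      have hnn : (0:ℝ) ≤ 1 - M⁻¹ * r := by
        rw [sub_nonneg]
        calc M⁻¹ * r ≤ M⁻¹ * M := by
              exact mul_le_mul_of_nonneg_left hrM (by positivity)
          _ = 1 := inv_mul_cancel₀ hM0.ne'
      rwa [hnorm_alg _ hnn] at this
    have : (1:ℝ) - M⁻¹ * r < 1 := by
      have : 0 < M⁻¹ * r := by positivity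
      linarith
    exact lt_of_le_of_lt hfin this
  · refine ⟨1, one_pos, ?_⟩
    rw [not_nontrivial_iff_subsingleton] at hnt
    have h0 : (1:C) - (1:ℝ) • (star w * w) = 0 := Subsingleton.elim _ _
    rw [h0, norm_zero]
    exact one_pos


lemma cstar_norm_one_le {C : Type*} [CStarAlgebra C] : ‖(1:C)‖ ≤ 1 := by
  by_cases h : Nontrivial C
  · haveI := h; exact le_of_eq norm_one
  · rw [not_nontrivial_iff_subsingleton] at h
    rw [show (1:C) = 0 from Subsingleton.elim _ _, norm_zero]; exact zero_le_one

lemma cstar_norm_pow_le {C : Type*} [CStarAlgebra C] (a : C) (k : ℕ) : ‖a ^ k‖ ≤ ‖a‖ ^ k := by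
  cases k with
  | zero => simpa using cstar_norm_one_le
  | succ n => exact norm_pow_le' a (Nat.succ_pos n)

lemma isUnit_of_smul_isUnit {C : Type*} [CStarAlgebra C] {t : ℝ} {v : C}
    (h : IsUnit (t • v)) : IsUnit v := by
  obtain ⟨u, hu⟩ := h
  refine ⟨⟨v, t • ↑u⁻¹, ?_, ?_⟩, rfl⟩
  · have h1 : v * (t • (↑u⁻¹:C)) = (t • v) * ↑u⁻¹ := by
      rw [mul_smul_comm, smul_mul_assoc]
    rw [h1, ← hu]; exact u.mul_inv
  · have h1 : (t • (↑u⁻¹:C)) * v = ↑u⁻¹ * (t • v) := by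
      rw [smul_mul_assoc, mul_smul_comm]
    rw [h1, ← hu]; exact u.inv_mul

lemma inv_approx {C : Type*} [CStarAlgebra C] (z : C) (t q : ℝ) (k : ℕ) (ht : 0 ≤ t) (hq : q < 1)
    (ha : ‖1 - t • (star z * z)‖ ≤ q) (hz : IsUnit z) :
    ‖Ring.inverse z - t • ((∑ j ∈ range k, (1 - t • (star z * z))^j) * star z)‖
      ≤ q ^ k / (1 - q) * (t * ‖z‖) := by
  set a := 1 - t • (star z * z) with hadef
  have hq0 : 0 ≤ q := le_trans (norm_nonneg a) ha
  have hu : IsUnit (1 - a) := by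
    have h' : ‖a‖ < 1 := lt_of_le_of_lt ha hq
    simpa using isUnit_one_sub_of_norm_lt_one h'
  have h1a : 1 - a = t • (star z * z) := sub_sub_cancel 1 _
  set Binv := Ring.inverse (1 - a) with hB
  have hBmul : Binv * (1 - a) = 1 := Ring.inverse_mul_cancel _ hu
  have hmulB : (1 - a) * Binv = 1 := Ring.mul_inverse_cancel _ hu
  have hinv : Ring.inverse z = t • (Binv * star z) := by
    have hleft : (t • (Binv * star z)) * z = 1 := by
      calc (t • (Binv * star z)) * z = Binv * (t • (star z * z)) := by
            rw [smul_mul_assoc, mul_assoc, ← mul_smul_comm]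
        _ = Binv * (1 - a) := by rw [h1a]
        _ = 1 := hBmul
    calc Ring.inverse z = 1 * Ring.inverse z := (one_mul _).symm
      _ = (t • (Binv * star z)) * z * Ring.inverse z := by rw [hleft]
      _ = (t • (Binv * star z)) * (z * Ring.inverse z) := mul_assoc _ _ _
      _ = t • (Binv * star z) := by rw [Ring.mul_inverse_cancel _ hz, mul_one]
  have hgeom : Binv - (∑ j ∈ range k, a ^ j) = Binv * a ^ k := by
    have h2 : (1 - a) * ∑ j ∈ range k, a ^ j = 1 - a ^ k := by
      have h3 := mul_geom_sum a k
      calc (1 - a) * ∑ j ∈ range k, a ^ j = -((a - 1) * ∑ j ∈ range k, a ^ j) := by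
            noncomm_ring
        _ = -(a ^ k - 1) := by rw [h3]
        _ = 1 - a ^ k := by noncomm_ring
    calc Binv - (∑ j ∈ range k, a ^ j)
        = Binv - Binv * ((1 - a) * ∑ j ∈ range k, a ^ j) := by
          rw [← mul_assoc, hBmul, one_mul]
      _ = Binv - Binv * (1 - a ^ k) := by rw [h2]
      _ = Binv * a ^ k := by noncomm_ring
  have hBnorm : ‖Binv‖ ≤ 1 / (1 - q) := by
    have hself : Binv = 1 + Binv * a := by
      calc Binv = Binv * (1 - a) + Binv * a := by noncomm_ring
        _ = 1 + Binv * a := by rw [hBmul]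
    have hb : ‖Binv‖ ≤ 1 + ‖Binv‖ * q := by
      calc ‖Binv‖ = ‖1 + Binv * a‖ := by rw [← hself]
        _ ≤ ‖(1:C)‖ + ‖Binv * a‖ := norm_add_le _ _
        _ ≤ 1 + ‖Binv‖ * q := by
            refine add_le_add cstar_norm_one_le ?_
            exact (norm_mul_le _ _).trans (mul_le_mul_of_nonneg_left ha (norm_nonneg _))
    rw [le_div_iff₀ (by linarith)]
    nlinarith [norm_nonneg Binv]
  have hdiff : Ring.inverse z - t • ((∑ j ∈ range k, a ^ j) * star z)
      = t • ((Binv * a ^ k) * star z) := by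
    rw [hinv, ← smul_sub, ← sub_mul, hgeom]
  rw [hdiff, norm_smul, Real.norm_eq_abs, abs_of_nonneg ht]
  have h4 : ‖(Binv * a ^ k) * star z‖ ≤ ‖Binv‖ * ‖a‖ ^ k * ‖star z‖ := by
    calc ‖(Binv * a ^ k) * star z‖ ≤ ‖Binv * a ^ k‖ * ‖star z‖ := norm_mul_le _ _
      _ ≤ (‖Binv‖ * ‖a ^ k‖) * ‖star z‖ := by
          exact mul_le_mul_of_nonneg_right (norm_mul_le _ _) (norm_nonneg _)
      _ ≤ ‖Binv‖ * ‖a‖ ^ k * ‖star z‖ := by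
          refine mul_le_mul_of_nonneg_right ?_ (norm_nonneg _)
          exact mul_le_mul_of_nonneg_left (cstar_norm_pow_le a k) (norm_nonneg _)
  calc t * ‖(Binv * a ^ k) * star z‖ ≤ t * (‖Binv‖ * ‖a‖ ^ k * ‖star z‖) :=
        mul_le_mul_of_nonneg_left h4 ht
    _ ≤ t * ((1 / (1 - q)) * q ^ k * ‖z‖) := by
        rw [norm_star]
        refine mul_le_mul_of_nonneg_left ?_ ht
        refine mul_le_mul_of_nonneg_right ?_ (norm_nonneg _)
        exact mul_le_mul hBnorm (pow_le_pow_left₀ (norm_nonneg a) ha k)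
          (pow_nonneg (norm_nonneg a) k)
          (le_of_lt (div_pos one_pos (by linarith)))
    _ = q ^ k / (1 - q) * (t * ‖z‖) := by ring



section Approx

variable {m : ℕ} {A : ℕ → Type*} [∀ n, CStarAlgebra (A n)] {B : Type*} [CStarAlgebra B]

/-- evaluation of a noncommutative *-polynomial -/
noncomputable def evalP {C : Type*} [CStarAlgebra C] (c : Fin m → C)
    (p : FreeAlgebra ℂ (Fin m ⊕ Fin m)) : C :=
  FreeAlgebra.lift ℂ (starTuple c) p

lemma evalP_one {C : Type*} [CStarAlgebra C] (c : Fin m → C) : evalP c (1 : FreeAlgebra ℂ (Fin m ⊕ Fin m)) = 1 := by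
  unfold evalP; exact map_one _

lemma evalP_zero {C : Type*} [CStarAlgebra C] (c : Fin m → C) : evalP c (0 : FreeAlgebra ℂ (Fin m ⊕ Fin m)) = 0 := by
  unfold evalP; exact map_zero _

lemma evalP_add {C : Type*} [CStarAlgebra C] (c : Fin m → C) (p q : FreeAlgebra ℂ (Fin m ⊕ Fin m)) :
    evalP c (p + q) = evalP c p + evalP c q := by unfold evalP; exact map_add _ _ _

lemma evalP_mul {C : Type*} [CStarAlgebra C] (c : Fin m → C) (p q : FreeAlgebra ℂ (Fin m ⊕ Fin m)) :
    evalP c (p * q) = evalP c p * evalP c q := by unfold evalP; exact map_mul _ _ _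

lemma evalP_smul {C : Type*} [CStarAlgebra C] (c : Fin m → C) (a : ℂ) (p : FreeAlgebra ℂ (Fin m ⊕ Fin m)) :
    evalP c (a • p) = a • evalP c p := by unfold evalP; exact map_smul _ _ _

lemma evalP_algebraMap {C : Type*} [CStarAlgebra C] (c : Fin m → C) (a : ℂ) :
    evalP c (algebraMap ℂ _ a) = algebraMap ℂ C a := by unfold evalP; exact AlgHom.commutes _ _

lemma evalP_iota {C : Type*} [CStarAlgebra C] (c : Fin m → C) (i : Fin m ⊕ Fin m) :
    evalP c (FreeAlgebra.ι ℂ i) = starTuple c i := by unfold evalP; exact FreeAlgebra.lift_ι_apply _ _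

/-- norm convergence of all *-polynomials -/
def NormConv (x : ∀ n, Fin m → A n) (y : Fin m → B) : Prop :=
  ∀ p, Tendsto (fun n => ‖evalP (x n) p‖) atTop (𝓝 ‖evalP y p‖)

/-- `(z, w)` is uniformly approximable by *-polynomial pairs -/
def Approx (x : ∀ n, Fin m → A n) (y : Fin m → B) (z : ∀ n, A n) (w : B) : Prop :=
  ∀ ε > 0, ∃ p, ‖evalP y p - w‖ < ε ∧ ∀ᶠ n in atTop, ‖evalP (x n) p - z n‖ < ε

variable {x : ∀ n, Fin m → A n} {y : Fin m → B}

lemma approx_poly (p) : Approx x y (fun n => evalP (x n) p) (evalP y p) :=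
  fun ε hε => ⟨p, by simpa using hε, Eventually.of_forall fun n => by simpa using hε⟩

lemma approx_congr {z z' : ∀ n, A n} {w : B} (h : Approx x y z w)
    (h' : ∀ᶠ n in atTop, z' n = z n) : Approx x y z' w := by
  intro ε hε
  obtain ⟨p, h1, h2⟩ := h ε hε
  refine ⟨p, h1, ?_⟩
  filter_upwards [h2, h'] with n h2 h3
  rw [h3]; exact h2

lemma approx_tendsto (hx : NormConv x y) {z : ∀ n, A n} {w : B} (h : Approx x y z w) :
    Tendsto (fun n => ‖z n‖) atTop (𝓝 ‖w‖) := by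
  rw [Metric.tendsto_nhds]
  intro ε hε
  obtain ⟨p, h1, h2⟩ := h (ε/3) (by linarith)
  have h3 : ∀ᶠ n in atTop, dist ‖evalP (x n) p‖ ‖evalP y p‖ < ε/3 :=
    (Metric.tendsto_nhds.mp (hx p)) _ (by linarith)
  filter_upwards [h2, h3] with n h4 h5
  rw [Real.dist_eq] at *
  have e1 : |‖z n‖ - ‖evalP (x n) p‖| ≤ ‖evalP (x n) p - z n‖ := by
    rw [abs_sub_comm]; exact abs_norm_sub_norm_le _ _
  have e2 : |‖evalP y p‖ - ‖w‖| ≤ ‖evalP y p - w‖ := abs_norm_sub_norm_le _ _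
  have t1 := abs_sub_le (‖z n‖) (‖evalP (x n) p‖) (‖w‖)
  have t2 := abs_sub_le (‖evalP (x n) p‖) (‖evalP y p‖) (‖w‖)
  linarith [abs_sub_abs_le_abs_sub (‖z n‖) (‖w‖)]

lemma approx_bound (hx : NormConv x y) {z : ∀ n, A n} {w : B} (h : Approx x y z w) :
    ∀ᶠ n in atTop, ‖z n‖ ≤ ‖w‖ + 1 := by
  have := (approx_tendsto hx h).eventually (gt_mem_nhds (lt_add_one ‖w‖))
  filter_upwards [this] with n hn using hn.le

lemma approx_add {z₁ z₂ : ∀ n, A n} {w₁ w₂ : B} (h₁ : Approx x y z₁ w₁)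
    (h₂ : Approx x y z₂ w₂) : Approx x y (fun n => z₁ n + z₂ n) (w₁ + w₂) := by
  intro ε hε
  obtain ⟨p₁, ha1, ha2⟩ := h₁ (ε/2) (by linarith)
  obtain ⟨p₂, hb1, hb2⟩ := h₂ (ε/2) (by linarith)
  refine ⟨p₁ + p₂, ?_, ?_⟩
  · calc ‖evalP y (p₁ + p₂) - (w₁ + w₂)‖
        = ‖(evalP y p₁ - w₁) + (evalP y p₂ - w₂)‖ := by
          rw [evalP_add]
          congr 1; abel
      _ ≤ ‖evalP y p₁ - w₁‖ + ‖evalP y p₂ - w₂‖ := norm_add_le _ _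
      _ < ε := by linarith
  · filter_upwards [ha2, hb2] with n h1 h2
    calc ‖evalP (x n) (p₁ + p₂) - (z₁ n + z₂ n)‖
        = ‖(evalP (x n) p₁ - z₁ n) + (evalP (x n) p₂ - z₂ n)‖ := by
          rw [evalP_add]
          congr 1; abel
      _ ≤ ‖evalP (x n) p₁ - z₁ n‖ + ‖evalP (x n) p₂ - z₂ n‖ := norm_add_le _ _
      _ < ε := by linarith

lemma approx_smul (c : ℂ) {z : ∀ n, A n} {w : B} (h : Approx x y z w) :
    Approx x y (fun n => c • z n) (c • w) := by
  intro ε hε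
  have hc : (0:ℝ) < ‖c‖ + 1 := by positivity
  obtain ⟨p, h1, h2⟩ := h (ε / (‖c‖ + 1)) (by positivity)
  refine ⟨c • p, ?_, ?_⟩
  · rw [evalP_smul]
    calc ‖c • evalP y p - c • w‖ = ‖c‖ * ‖evalP y p - w‖ := by rw [← smul_sub, norm_smul]
      _ ≤ (‖c‖ + 1) * ‖evalP y p - w‖ :=
          mul_le_mul_of_nonneg_right (by linarith) (norm_nonneg _)
      _ < (‖c‖ + 1) * (ε / (‖c‖ + 1)) := (mul_lt_mul_iff_right₀ hc).2 h1
      _ = ε := by field_simp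
  · filter_upwards [h2] with n hn
    rw [evalP_smul]
    calc ‖c • evalP (x n) p - c • z n‖ = ‖c‖ * ‖evalP (x n) p - z n‖ := by
          rw [← smul_sub, norm_smul]
      _ ≤ (‖c‖ + 1) * ‖evalP (x n) p - z n‖ :=
          mul_le_mul_of_nonneg_right (by linarith) (norm_nonneg _)
      _ < (‖c‖ + 1) * (ε / (‖c‖ + 1)) := (mul_lt_mul_iff_right₀ hc).2 hn
      _ = ε := by field_simp

lemma approx_one : Approx x y (fun _ => 1) 1 := by
  have h := approx_poly (x := x) (y := y) 1
  rw [evalP_one] at h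
  exact approx_congr h (Eventually.of_forall fun n => (evalP_one _).symm)

lemma approx_zero : Approx x y (fun _ => 0) 0 := by
  have h := approx_poly (x := x) (y := y) 0
  rw [evalP_zero] at h
  exact approx_congr h (Eventually.of_forall fun n => (evalP_zero _).symm)

lemma approx_scalar (c : ℂ) :
    Approx x y (fun _ => algebraMap ℂ (A _) c) (algebraMap ℂ B c) := by
  have h := approx_smul c (approx_one (x := x) (y := y))
  simpa [Algebra.algebraMap_eq_smul_one] using h

lemma approx_neg {z : ∀ n, A n} {w : B} (h : Approx x y z w) :
    Approx x y (fun n => -(z n)) (-w) := by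
  have := approx_smul (-1 : ℂ) h
  simpa using this

lemma approx_sub {z₁ z₂ : ∀ n, A n} {w₁ w₂ : B} (h₁ : Approx x y z₁ w₁)
    (h₂ : Approx x y z₂ w₂) : Approx x y (fun n => z₁ n - z₂ n) (w₁ - w₂) := by
  have := approx_add h₁ (approx_neg h₂)
  simpa [sub_eq_add_neg] using this

lemma star_starTuple {C : Type*} [CStarAlgebra C] (c : Fin m → C) (i : Fin m ⊕ Fin m) :
    star (starTuple c i) = starTuple c (i.swap) := by
  cases i with
  | inl j => simp [starTuple]
  | inr j => simp [starTuple]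

/-- existence of a simultaneous "star" polynomial for the two families -/
lemma exists_star_poly (p : FreeAlgebra ℂ (Fin m ⊕ Fin m)) :
    ∃ p', evalP y p' = star (evalP y p) ∧ ∀ n, evalP (x n) p' = star (evalP (x n) p) := by
  induction p using FreeAlgebra.induction with
  | grade0 r =>
    refine ⟨algebraMap ℂ _ (starRingEnd ℂ r), ?_, fun n => ?_⟩
    · rw [evalP_algebraMap, evalP_algebraMap, ← algebraMap_star_comm]; rfl
    · rw [evalP_algebraMap, evalP_algebraMap, ← algebraMap_star_comm]; rfl
  | grade1 i =>
    refine ⟨FreeAlgebra.ι ℂ i.swap, ?_, fun n => ?_⟩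
    · rw [evalP_iota, evalP_iota, star_starTuple]
    · rw [evalP_iota, evalP_iota, star_starTuple]
  | mul a b ha hb =>
    obtain ⟨a', ha1, ha2⟩ := ha
    obtain ⟨b', hb1, hb2⟩ := hb
    refine ⟨b' * a', ?_, fun n => ?_⟩
    · rw [evalP_mul, evalP_mul, ha1, hb1, star_mul]
    · rw [evalP_mul, evalP_mul, ha2, hb2, star_mul]
  | add a b ha hb =>
    obtain ⟨a', ha1, ha2⟩ := ha
    obtain ⟨b', hb1, hb2⟩ := hb
    refine ⟨a' + b', ?_, fun n => ?_⟩
    · rw [evalP_add, evalP_add, ha1, hb1, star_add]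
    · rw [evalP_add, evalP_add, ha2, hb2, star_add]

lemma approx_star {z : ∀ n, A n} {w : B} (h : Approx x y z w) :
    Approx x y (fun n => star (z n)) (star w) := by
  intro ε hε
  obtain ⟨p, h1, h2⟩ := h ε hε
  obtain ⟨p', hp1, hp2⟩ := exists_star_poly (x := x) (y := y) p
  refine ⟨p', ?_, ?_⟩
  · rw [hp1, ← star_sub, norm_star]; exact h1
  · filter_upwards [h2] with n hn
    rw [hp2 n, ← star_sub, norm_star]; exact hn

lemma approx_mul (hx : NormConv x y) {z₁ z₂ : ∀ n, A n} {w₁ w₂ : B} (h₁ : Approx x y z₁ w₁)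
    (h₂ : Approx x y z₂ w₂) : Approx x y (fun n => z₁ n * z₂ n) (w₁ * w₂) := by
  intro ε hε
  set C₁ : ℝ := ‖w₁‖ + 1 with hC₁
  set C₂ : ℝ := ‖w₂‖ + 1 with hC₂
  have hC₁0 : 0 < C₁ := by positivity
  have hC₂0 : 0 < C₂ := by positivity
  set D : ℝ := C₁ + C₂ + 2 with hD
  have hD0 : 0 < D := by positivity
  set δ : ℝ := min 1 (ε / D) with hδdef
  have hδ0 : 0 < δ := lt_min one_pos (by positivity)
  have hδ1 : δ ≤ 1 := min_le_left _ _
  have hδD : δ * (D - 1) < ε := by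
    have h1 : δ ≤ ε / D := min_le_right _ _
    have : δ * (D - 1) ≤ (ε / D) * (D - 1) := by
      exact mul_le_mul_of_nonneg_right h1 (by linarith)
    calc δ * (D - 1) ≤ (ε / D) * (D - 1) := this
      _ < (ε / D) * D := by
          refine (mul_lt_mul_iff_right₀ (by positivity)).2 ?_
          linarith
      _ = ε := by field_simp
  obtain ⟨p₁, ha1, ha2⟩ := h₁ δ hδ0
  obtain ⟨p₂, hb1, hb2⟩ := h₂ δ hδ0
  have hz2b := approx_bound hx h₂
  have hz1b := approx_bound hx h₁
  refine ⟨p₁ * p₂, ?_, ?_⟩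
  · rw [evalP_mul]
    have key : evalP y p₁ * evalP y p₂ - w₁ * w₂
        = evalP y p₁ * (evalP y p₂ - w₂) + (evalP y p₁ - w₁) * w₂ := by noncomm_ring
    have hn1 : ‖evalP y p₁‖ ≤ C₁ := by
      have := abs_norm_sub_norm_le (evalP y p₁) w₁
      have h2 := le_trans (le_abs_self _) this
      rw [hC₁]; linarith [ha1.le]
    calc ‖evalP y p₁ * evalP y p₂ - w₁ * w₂‖
        ≤ ‖evalP y p₁ * (evalP y p₂ - w₂)‖ + ‖(evalP y p₁ - w₁) * w₂‖ := by
          rw [key]; exact norm_add_le _ _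
      _ ≤ C₁ * δ + δ * ‖w₂‖ := by
          refine add_le_add ?_ ?_
          · exact (norm_mul_le _ _).trans (mul_le_mul hn1 hb1.le (norm_nonneg _) hC₁0.le)
          · exact (norm_mul_le _ _).trans
              (mul_le_mul ha1.le le_rfl (norm_nonneg _) hδ0.le)
      _ ≤ δ * (D - 1) := by
          rw [hD, hC₁, hC₂]; nlinarith [norm_nonneg w₂, hδ0.le]
      _ < ε := hδD
  · filter_upwards [ha2, hb2, hz2b, hz1b] with n h1 h2 h3 h4z
    rw [evalP_mul]
    have key : evalP (x n) p₁ * evalP (x n) p₂ - z₁ n * z₂ n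
        = evalP (x n) p₁ * (evalP (x n) p₂ - z₂ n) + (evalP (x n) p₁ - z₁ n) * z₂ n := by
      noncomm_ring
    have hn1 : ‖evalP (x n) p₁‖ ≤ ‖z₁ n‖ + δ := by
      have := abs_norm_sub_norm_le (evalP (x n) p₁) (z₁ n)
      have h4 := le_trans (le_abs_self _) this
      linarith [h1.le]
    have hz1 : ‖z₁ n‖ ≤ C₁ := by rw [hC₁]; exact h4z
    calc ‖evalP (x n) p₁ * evalP (x n) p₂ - z₁ n * z₂ n‖
        ≤ ‖evalP (x n) p₁ * (evalP (x n) p₂ - z₂ n)‖ + ‖(evalP (x n) p₁ - z₁ n) * z₂ n‖ := by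
          rw [key]; exact norm_add_le _ _
      _ ≤ (C₁ + 1) * δ + δ * C₂ := by
          refine add_le_add ?_ ?_
          · refine (norm_mul_le _ _).trans (mul_le_mul ?_ h2.le (norm_nonneg _) ?_)
            · linarith
            · linarith
          · exact (norm_mul_le _ _).trans (mul_le_mul h1.le (by rw [hC₂]; linarith)
              (norm_nonneg _) hδ0.le)
      _ ≤ δ * (D - 1) := by rw [hD]; nlinarith [hδ0.le]
      _ < ε := hδD

lemma approx_pow (hx : NormConv x y) {z : ∀ n, A n} {w : B} (h : Approx x y z w) (k : ℕ) :
    Approx x y (fun n => z n ^ k) (w ^ k) := by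
  induction k with
  | zero => simpa only [pow_zero] using approx_one (x := x) (y := y)
  | succ j ih => simpa only [pow_succ] using approx_mul hx ih h

lemma approx_geom (hx : NormConv x y) {z : ∀ n, A n} {w : B} (h : Approx x y z w) (k : ℕ) :
    Approx x y (fun n => ∑ j ∈ range k, z n ^ j) (∑ j ∈ range k, w ^ j) := by
  induction k with
  | zero => simpa only [range_zero, sum_empty] using approx_zero (x := x) (y := y)
  | succ j ih => simpa only [sum_range_succ] using approx_add ih (approx_pow hx h j)

lemma approx_of_close {z : ∀ n, A n} {w : B}
    (h : ∀ δ > (0:ℝ), ∃ u v, Approx x y u v ∧ ‖v - w‖ < δ ∧ ∀ᶠ n in atTop, ‖u n - z n‖ < δ) :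
    Approx x y z w := by
  intro ε hε
  obtain ⟨u, v, hA, h1, h2⟩ := h (ε/2) (by linarith)
  obtain ⟨p, hp1, hp2⟩ := hA (ε/2) (by linarith)
  refine ⟨p, ?_, ?_⟩
  · calc ‖evalP y p - w‖ = ‖(evalP y p - v) + (v - w)‖ := by rw [sub_add_sub_cancel]
      _ ≤ ‖evalP y p - v‖ + ‖v - w‖ := norm_add_le _ _
      _ < ε := by linarith
  · filter_upwards [hp2, h2] with n hn1 hn2
    calc ‖evalP (x n) p - z n‖ = ‖(evalP (x n) p - u n) + (u n - z n)‖ := by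
          rw [sub_add_sub_cancel]
      _ ≤ ‖evalP (x n) p - u n‖ + ‖u n - z n‖ := norm_add_le _ _
      _ < ε := by linarith

lemma approx_smul_real (t : ℝ) {z : ∀ n, A n} {w : B} (h : Approx x y z w) :
    Approx x y (fun n => t • z n) (t • w) := by
  have h2 := approx_smul (t : ℂ) h
  have e1 : ∀ n (v : A n), (t : ℂ) • v = t • v := fun n v => by
    rw [← algebraMap_smul ℂ t v, Complex.coe_algebraMap]
  have e2 : ∀ v : B, (t : ℂ) • v = t • v := fun v => by
    rw [← algebraMap_smul ℂ t v, Complex.coe_algebraMap]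
  rw [e2] at h2
  exact approx_congr h2 (Eventually.of_forall fun n => (e1 n (z n)).symm)

lemma approx_inv (hx : NormConv x y) {z : ∀ n, A n} {w : B} (h : Approx x y z w)
    (hw : IsUnit w) :
    (∀ᶠ n in atTop, IsUnit (z n)) ∧
      Approx x y (fun n => Ring.inverse (z n)) (Ring.inverse w) := by
  obtain ⟨t, ht, hcon⟩ := exists_contraction hw
  obtain ⟨t', ht', hcon'⟩ := exists_contraction hw.star
  rw [star_star] at hcon'
  have hzs : Approx x y (fun n => star (z n)) (star w) := approx_star h
  have hA1 : Approx x y (fun n => 1 - t • (star (z n) * z n)) (1 - t • (star w * w)) :=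
    approx_sub approx_one (approx_smul_real t (approx_mul hx hzs h))
  have hA2 : Approx x y (fun n => 1 - t' • (z n * star (z n))) (1 - t' • (w * star w)) :=
    approx_sub approx_one (approx_smul_real t' (approx_mul hx h hzs))
  set q₀ : ℝ := ‖(1:B) - t • (star w * w)‖ with hq₀
  set q : ℝ := (1 + q₀) / 2 with hqdef
  have hq0 : 0 ≤ q := by rw [hqdef]; positivity
  have hq1 : q < 1 := by rw [hqdef]; linarith
  have hq₀q : q₀ < q := by rw [hqdef]; linarith
  have hev1 : ∀ᶠ n in atTop, ‖(1:A n) - t • (star (z n) * z n)‖ ≤ q := by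
    have := (approx_tendsto hx hA1).eventually (gt_mem_nhds hq₀q)
    filter_upwards [this] with n hn using hn.le
  have hev2 : ∀ᶠ n in atTop, ‖(1:A n) - t' • (z n * star (z n))‖ < 1 := by
    exact (approx_tendsto hx hA2).eventually (gt_mem_nhds hcon')
  have hUnitV : ∀ᶠ n in atTop, IsUnit (star (z n) * z n) := by
    filter_upwards [hev1] with n hn
    have h1 : ‖(1:A n) - t • (star (z n) * z n)‖ < 1 := lt_of_le_of_lt hn hq1
    have h2 := isUnit_one_sub_of_norm_lt_one h1
    rw [sub_sub_cancel] at h2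
    exact isUnit_of_smul_isUnit h2
  have hUnitV' : ∀ᶠ n in atTop, IsUnit (z n * star (z n)) := by
    filter_upwards [hev2] with n hn
    have h2 := isUnit_one_sub_of_norm_lt_one hn
    rw [sub_sub_cancel] at h2
    exact isUnit_of_smul_isUnit h2
  have hUnit : ∀ᶠ n in atTop, IsUnit (z n) := by
    filter_upwards [hUnitV, hUnitV'] with n h1 h2
    set l := Ring.inverse (star (z n) * z n) * star (z n) with hl
    set rr := star (z n) * Ring.inverse (z n * star (z n)) with hrr
    have hlz : l * z n = 1 := by
      rw [hl, mul_assoc]; exact Ring.inverse_mul_cancel _ h1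
    have hzr : z n * rr = 1 := by
      rw [hrr, ← mul_assoc]; exact Ring.mul_inverse_cancel _ h2
    have hlr : l = rr := by
      calc l = l * (z n * rr) := by rw [hzr, mul_one]
        _ = (l * z n) * rr := (mul_assoc l (z n) rr).symm
        _ = rr := by rw [hlz, one_mul]
    exact ⟨⟨z n, rr, hzr, hlr ▸ hlz⟩, rfl⟩
  refine ⟨hUnit, ?_⟩
  apply approx_of_close
  intro δ hδ
  have hqplt : Tendsto (fun k : ℕ => q ^ k * ((1 - q)⁻¹ * (t * (‖w‖ + 1)))) atTop (𝓝 0) := by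
    have := tendsto_pow_atTop_nhds_zero_of_lt_one hq0 hq1
    simpa using this.mul_const ((1 - q)⁻¹ * (t * (‖w‖ + 1)))
  obtain ⟨k, hk⟩ := (hqplt.eventually (gt_mem_nhds hδ)).exists
  set c := (1 - q)⁻¹ * (t * (‖w‖ + 1)) with hc
  -- the approximating pair
  set u : ∀ n, A n := fun n =>
    t • ((∑ j ∈ range k, ((1:A n) - t • (star (z n) * z n)) ^ j) * star (z n)) with hu
  set v : B := t • ((∑ j ∈ range k, ((1:B) - t • (star w * w)) ^ j) * star w) with hv
  have hAuv : Approx x y u v :=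
    approx_smul_real t (approx_mul hx (approx_geom hx hA1 k) hzs)
  refine ⟨u, v, hAuv, ?_, ?_⟩
  · have hbd := inv_approx w t q k ht.le hq1 (le_of_lt hq₀q) hw
    rw [norm_sub_rev]
    refine lt_of_le_of_lt (le_trans hbd ?_) hk
    rw [hc]
    have h1 : q ^ k / (1 - q) * (t * ‖w‖) ≤ q ^ k / (1 - q) * (t * (‖w‖ + 1)) := by
      have h1q : (0:ℝ) < 1 - q := by linarith
      refine mul_le_mul_of_nonneg_left ?_ (by positivity)
      exact mul_le_mul_of_nonneg_left (by linarith) ht.le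
    calc q ^ k / (1 - q) * (t * ‖w‖) ≤ q ^ k / (1 - q) * (t * (‖w‖ + 1)) := h1
      _ = q ^ k * ((1 - q)⁻¹ * (t * (‖w‖ + 1))) := by ring
  · have hzb := approx_bound hx h
    filter_upwards [hev1, hUnit, hzb] with n h1 h2 h3
    have hbd := inv_approx (z n) t q k ht.le hq1 h1 h2
    rw [norm_sub_rev]
    refine lt_of_le_of_lt (le_trans hbd ?_) hk
    rw [hc]
    have h1q : (0:ℝ) < 1 - q := by linarith
    calc q ^ k / (1 - q) * (t * ‖z n‖) ≤ q ^ k / (1 - q) * (t * (‖w‖ + 1)) := by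
          refine mul_le_mul_of_nonneg_left ?_ (by positivity)
          exact mul_le_mul_of_nonneg_left (by linarith) ht.le
      _ = q ^ k * ((1 - q)⁻¹ * (t * (‖w‖ + 1))) := by ring

end Approx


section RatLemmas

variable {σ : Type*} {B' : Type*} [Ring B'] [Algebra ℂ B'] {a : σ → B'}

lemma evalq_scalar (c : ℂ) : (RatExpr.scalar c).eval? a = some (algebraMap ℂ B' c) := rfl

lemma evalq_var (i : σ) : (RatExpr.var i).eval? a = some (a i) := rfl

lemma evalq_add_eq {r s : RatExpr σ} {b c : B'} (hr : r.eval? a = some b)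
    (hs : s.eval? a = some c) : (r.add s).eval? a = some (b + c) := by
  simp [RatExpr.eval?, hr, hs]

lemma evalq_mul_eq {r s : RatExpr σ} {b c : B'} (hr : r.eval? a = some b)
    (hs : s.eval? a = some c) : (r.mul s).eval? a = some (b * c) := by
  simp [RatExpr.eval?, hr, hs]

lemma evalq_inv_eq {r : RatExpr σ} {b : B'} (hr : r.eval? a = some b) (hb : IsUnit b) :
    (r.inv).eval? a = some (Ring.inverse b) := by
  simp [RatExpr.eval?, hr, hb]

lemma dom_add {r s : RatExpr σ} (h : (r.add s).InDomain a) :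
    r.InDomain a ∧ s.InDomain a := by
  unfold RatExpr.InDomain at *
  cases hr : r.eval? a with
  | none => rw [show (r.add s).eval? a = none by simp [RatExpr.eval?, hr]] at h; simp at h
  | some b =>
    cases hs : s.eval? a with
    | none => rw [show (r.add s).eval? a = none by simp [RatExpr.eval?, hr, hs]] at h; simp at h
    | some c => simp

lemma dom_mul {r s : RatExpr σ} (h : (r.mul s).InDomain a) :
    r.InDomain a ∧ s.InDomain a := by
  unfold RatExpr.InDomain at *
  cases hr : r.eval? a with
  | none => rw [show (r.mul s).eval? a = none by simp [RatExpr.eval?, hr]] at h; simp at h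
  | some b =>
    cases hs : s.eval? a with
    | none => rw [show (r.mul s).eval? a = none by simp [RatExpr.eval?, hr, hs]] at h; simp at h
    | some c => simp

lemma dom_inv {r : RatExpr σ} (h : (r.inv).InDomain a) :
    ∃ b, r.eval? a = some b ∧ IsUnit b := by
  unfold RatExpr.InDomain at h
  cases hr : r.eval? a with
  | none => rw [show (r.inv).eval? a = none by simp [RatExpr.eval?, hr]] at h; simp at h
  | some b =>
    refine ⟨b, rfl, ?_⟩
    by_contra hu
    rw [show (r.inv).eval? a = none by simp [RatExpr.eval?, hr, hu]] at h
    simp at h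

lemma eval_of {r : RatExpr σ} {b : B'} (hr : r.eval? a = some b) : r.eval a = b := by
  unfold RatExpr.eval; rw [hr]; rfl

lemma indomain_of {r : RatExpr σ} {b : B'} (hr : r.eval? a = some b) : r.InDomain a := by
  unfold RatExpr.InDomain; rw [hr]; rfl

lemma exists_of_indomain {r : RatExpr σ} (h : r.InDomain a) : ∃ b, r.eval? a = some b :=
  Option.isSome_iff_exists.mp h

end RatLemmas

section Main

variable {m : ℕ} {A : ℕ → Type*} [∀ n, CStarAlgebra (A n)] {B : Type*} [CStarAlgebra B]
variable {x : ∀ n, Fin m → A n} {y : Fin m → B}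

lemma main_induction (hx : NormConv x y) (r : RatExpr (Fin m ⊕ Fin m))
    (hdom : r.InDomain (starTuple y)) :
    (∀ᶠ n in atTop, r.InDomain (starTuple (x n))) ∧
      Approx x y (fun n => r.eval (starTuple (x n))) (r.eval (starTuple y)) := by
  induction r with
  | scalar c =>
    refine ⟨Eventually.of_forall fun n => indomain_of (evalq_scalar c), ?_⟩
    have h := approx_scalar (x := x) (y := y) c
    rw [show (RatExpr.scalar c).eval (starTuple y) = algebraMap ℂ B c from
      eval_of (evalq_scalar c)]
    exact approx_congr h (Eventually.of_forall fun n =>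
      (eval_of (a := starTuple (x n)) (evalq_scalar c)).symm)
  | var i =>
    refine ⟨Eventually.of_forall fun n => indomain_of (evalq_var i), ?_⟩
    have h := approx_poly (x := x) (y := y) (FreeAlgebra.ι ℂ i)
    rw [evalP_iota] at h
    have h2 := approx_congr h (Eventually.of_forall fun n => (evalP_iota (x n) i).symm)
    rw [show (RatExpr.var i).eval (starTuple y) = starTuple y i from eval_of (evalq_var i)]
    exact approx_congr h2 (Eventually.of_forall fun n => by
      rw [show (RatExpr.var i).eval (starTuple (x n)) = starTuple (x n) i from
        eval_of (evalq_var i)])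
  | add r s ihr ihs =>
    obtain ⟨hdr, hds⟩ := dom_add hdom
    obtain ⟨hr1, hr2⟩ := ihr hdr
    obtain ⟨hs1, hs2⟩ := ihs hds
    obtain ⟨b, hb⟩ := exists_of_indomain hdr
    obtain ⟨c, hc⟩ := exists_of_indomain hds
    refine ⟨?_, ?_⟩
    · filter_upwards [hr1, hs1] with n h1 h2
      obtain ⟨bn, hbn⟩ := exists_of_indomain h1
      obtain ⟨cn, hcn⟩ := exists_of_indomain h2
      exact indomain_of (evalq_add_eq hbn hcn)
    · have hadd := approx_add hr2 hs2
      rw [show (r.add s).eval (starTuple y) = r.eval (starTuple y) + s.eval (starTuple y) by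
        rw [eval_of (evalq_add_eq hb hc), eval_of hb, eval_of hc]]
      refine approx_congr hadd ?_
      filter_upwards [hr1, hs1] with n h1 h2
      obtain ⟨bn, hbn⟩ := exists_of_indomain h1
      obtain ⟨cn, hcn⟩ := exists_of_indomain h2
      rw [eval_of (evalq_add_eq hbn hcn), eval_of hbn, eval_of hcn]
  | mul r s ihr ihs =>
    obtain ⟨hdr, hds⟩ := dom_mul hdom
    obtain ⟨hr1, hr2⟩ := ihr hdr
    obtain ⟨hs1, hs2⟩ := ihs hds
    obtain ⟨b, hb⟩ := exists_of_indomain hdr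
    obtain ⟨c, hc⟩ := exists_of_indomain hds
    refine ⟨?_, ?_⟩
    · filter_upwards [hr1, hs1] with n h1 h2
      obtain ⟨bn, hbn⟩ := exists_of_indomain h1
      obtain ⟨cn, hcn⟩ := exists_of_indomain h2
      exact indomain_of (evalq_mul_eq hbn hcn)
    · have hmul := approx_mul hx hr2 hs2
      rw [show (r.mul s).eval (starTuple y) = r.eval (starTuple y) * s.eval (starTuple y) by
        rw [eval_of (evalq_mul_eq hb hc), eval_of hb, eval_of hc]]
      refine approx_congr hmul ?_
      filter_upwards [hr1, hs1] with n h1 h2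
      obtain ⟨bn, hbn⟩ := exists_of_indomain h1
      obtain ⟨cn, hcn⟩ := exists_of_indomain h2
      rw [eval_of (evalq_mul_eq hbn hcn), eval_of hbn, eval_of hcn]
  | inv r ihr =>
    obtain ⟨b, hb, hub⟩ := dom_inv hdom
    have hdr : r.InDomain (starTuple y) := indomain_of hb
    obtain ⟨hr1, hr2⟩ := ihr hdr
    have hbeq : r.eval (starTuple y) = b := eval_of hb
    have hub' : IsUnit (r.eval (starTuple y)) := hbeq ▸ hub
    obtain ⟨hUnit, hAinv⟩ := approx_inv hx hr2 hub'
    refine ⟨?_, ?_⟩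
    · filter_upwards [hr1, hUnit] with n h1 h2
      obtain ⟨bn, hbn⟩ := exists_of_indomain h1
      have h2' : IsUnit bn := by rwa [eval_of hbn] at h2
      exact indomain_of (evalq_inv_eq hbn h2')
    · rw [show (r.inv).eval (starTuple y) = Ring.inverse (r.eval (starTuple y)) by
        rw [eval_of (evalq_inv_eq hb hub), hbeq]]
      refine approx_congr hAinv ?_
      filter_upwards [hr1, hUnit] with n h1 h2
      obtain ⟨bn, hbn⟩ := exists_of_indomain h1
      have h2' : IsUnit bn := by rwa [eval_of hbn] at h2
      rw [eval_of (evalq_inv_eq hbn h2'), eval_of hbn]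

end Main

end Aux


/-- If `x⁽ⁿ⁾` strongly converges to `x` and `(x, x*)` lies in the domain of the rational
expression `r`, then `(x⁽ⁿ⁾, (x⁽ⁿ⁾)*)` lies in the domain of `r` eventually and
`‖r(x⁽ⁿ⁾, (x⁽ⁿ⁾)*)‖ → ‖r(x, x*)‖`. -/
theorem stmt3 {m : ℕ} {A : ℕ → Type*} [∀ n, CStarAlgebra (A n)]
    {B : Type*} [CStarAlgebra B]
    (τ' : ∀ n, A n → ℂ) (τ : B → ℂ)
    (hτ' : ∀ n, IsFaithfulTracialState (A n) (τ' n)) (hτ : IsFaithfulTracialState B τ)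
    (x : ∀ n, Fin m → A n) (y : Fin m → B)
    (hconv : StronglyConverges τ' τ x y)
    (r : RatExpr (Fin m ⊕ Fin m))
    (hdom : r.InDomain (starTuple y)) :
    (∀ᶠ n in atTop, r.InDomain (starTuple (x n))) ∧
    Tendsto (fun n => ‖r.eval (starTuple (x n))‖) atTop (𝓝 ‖r.eval (starTuple y)‖) := by
  have hx : NormConv x y := fun p => (hconv p).2
  obtain ⟨h1, h2⟩ := main_induction hx r hdom
  exact ⟨h1, approx_tendsto hx h2⟩
end

section
/- Let (𝒜⁽ⁿ⁾, τ⁽ⁿ⁾) for n ∈ ℕ and (𝒜, τ) be unital C*-algebras equipped with faithful tracial states. Let a⁽ⁿ⁾ ∈ 𝒜⁽ⁿ⁾ and a ∈ 𝒜 be such that for every noncommutative *-polynomial p in 2 variables, lim_{n→∞} ‖p(a⁽ⁿ⁾, (a⁽ⁿ⁾)*)‖ = ‖p(a, a*)‖. If a is invertible in 𝒜, then a⁽ⁿ⁾ is invertible in 𝒜⁽ⁿ⁾ for all sufficiently large n, and lim_{n→∞} ‖(a⁽ⁿ⁾)⁻¹‖ = ‖a⁻¹‖. -/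
open Filter Topology

lemma keyInv {B : Type*} [CStarAlgebra B] {b : B} {c : ℝ}
    (h : ‖algebraMap ℝ B c - b‖ < c) : IsUnit b := by
  cases subsingleton_or_nontrivial B with
  | inl hB => exact isUnit_of_subsingleton b
  | inr hB =>
    by_contra hb
    have h0 : (0 : ℂ) ∈ spectrum ℂ b := by
      by_contra h0
      exact hb ((spectrum.zero_notMem_iff ℂ).mp h0)
    have hmem : ((c : ℂ) : ℂ) ∈ spectrum ℂ (algebraMap ℂ B (c : ℂ) - b) := by
      rw [← spectrum.singleton_sub_eq]
      simpa using Set.sub_mem_sub (Set.mem_singleton (c:ℂ)) h0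
    have h2 : (algebraMap ℂ B) ((c : ℂ)) = algebraMap ℝ B c := by
      rw [IsScalarTower.algebraMap_apply ℝ ℂ B c, Complex.coe_algebraMap]
    have := spectrum.norm_le_norm_of_mem hmem
    rw [h2] at this
    have hc : 0 < c := lt_of_le_of_lt (norm_nonneg _) h
    simp only [Complex.norm_real, Real.norm_of_nonneg hc.le] at this
    exact absurd (lt_of_le_of_lt this h) (lt_irrefl c)

lemma keyNorm {B : Type*} [CStarAlgebra B] [Nontrivial B] {b : B}
    (hsa : IsSelfAdjoint b) (hnn : ∀ x ∈ spectrum ℝ b, 0 ≤ x) (hu : IsUnit b)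
    {c : ℝ} (hc : ‖b‖ ≤ c) :
    0 < c - ‖algebraMap ℝ B c - b‖ ∧
      ‖Ring.inverse b‖ = (c - ‖algebraMap ℝ B c - b‖)⁻¹ := by
  set S := spectrum ℝ b with hSdef
  have hScompact : IsCompact S := ContinuousFunctionalCalculus.isCompact_spectrum b
  have hSne : S.Nonempty := CFC.spectrum_nonempty ℝ b hsa
  set m := sInf S with hm
  have hmS : m ∈ S := hScompact.sInf_mem hSne
  have hm0 : 0 < m := by
    rcases (hnn m hmS).lt_or_eq with h | h
    · exact h
    · exact absurd (h ▸ hmS) (spectrum.zero_notMem ℝ hu)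
  have hub : ∀ t ∈ S, t ≤ c := fun t ht =>
    le_trans (le_trans (le_abs_self t) (spectrum.norm_le_norm_of_mem ht)) hc
  have hlb : ∀ t ∈ S, m ≤ t := fun t ht => csInf_le hScompact.bddBelow ht
  have e1 : algebraMap ℝ B c - b = cfc (fun t : ℝ => c - t) b := by
    rw [cfc_sub _ _ b, cfc_const c b, cfc_id' ℝ b]
  have h1 : ‖algebraMap ℝ B c - b‖ = c - m := by
    rw [e1]
    refine ((IsGreatest.norm_cfc (fun t : ℝ => c - t) b).unique ⟨⟨m, hmS, ?_⟩, ?_⟩)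
    · show ‖c - m‖ = c - m
      rw [Real.norm_of_nonneg (by linarith [hub m hmS])]
    · rintro y ⟨t, ht, rfl⟩
      show ‖c - t‖ ≤ c - m
      rw [Real.norm_of_nonneg (by linarith [hub t ht])]
      linarith [hlb t ht]
  have hne : ∀ t ∈ S, t ≠ 0 := fun t ht => (lt_of_lt_of_le hm0 (hlb t ht)).ne'
  have e2 : Ring.inverse b = cfc (fun t : ℝ => t⁻¹) b := by
    have hsa' : IsSelfAdjoint (hu.unit : B) := by rw [hu.unit_spec]; exact hsa
    rw [← hu.unit_spec, Ring.inverse_unit]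
    exact (cfc_inv_id (R := ℝ) hu.unit).symm
  have h2 : ‖Ring.inverse b‖ = m⁻¹ := by
    rw [e2]
    refine ((IsGreatest.norm_cfc (fun t : ℝ => t⁻¹) b ?_).unique ⟨⟨m, hmS, ?_⟩, ?_⟩)
    · exact ContinuousOn.inv₀ continuousOn_id hne
    · show ‖m⁻¹‖ = m⁻¹
      rw [Real.norm_of_nonneg (by positivity)]
    · rintro y ⟨t, ht, rfl⟩
      show ‖t⁻¹‖ ≤ m⁻¹
      have ht0 : 0 < t := lt_of_lt_of_le hm0 (hlb t ht)
      rw [Real.norm_of_nonneg (by positivity)]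
      exact one_div t ▸ one_div m ▸ one_div_le_one_div_of_le hm0 (hlb t ht)
  refine ⟨by rw [h1]; linarith, ?_⟩
  rw [h1, h2]
  congr 1
  ring

lemma isUnit_of_star_parts {B : Type*} [Monoid B] [StarMul B] {x : B}
    (h1 : IsUnit (star x * x)) (h2 : IsUnit (x * star x)) : IsUnit x := by
  obtain ⟨u, hu⟩ := h1
  obtain ⟨v, hv⟩ := h2
  have hl : ((u⁻¹ : Bˣ) : B) * star x * x = 1 := by
    rw [mul_assoc, ← hu, Units.inv_mul]
  have hr : x * (star x * ((v⁻¹ : Bˣ) : B)) = 1 := by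
    rw [← mul_assoc, ← hv, Units.mul_inv]
  have hLR : ((u⁻¹ : Bˣ) : B) * star x = star x * ((v⁻¹ : Bˣ) : B) := by
    have h3 : (((u⁻¹ : Bˣ) : B) * star x * x) * (star x * ((v⁻¹ : Bˣ) : B)) =
        star x * ((v⁻¹ : Bˣ) : B) := by rw [hl, one_mul]
    rwa [mul_assoc, hr, mul_one] at h3
  exact ⟨⟨x, star x * ((v⁻¹ : Bˣ) : B), hr, by rw [← hLR]; exact hl⟩, rfl⟩

lemma inverse_star_mul {B : Type*} [CStarAlgebra B] {x : B} (hx : IsUnit x) :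
    Ring.inverse (star x * x) = Ring.inverse x * star (Ring.inverse x) := by
  have hu : IsUnit (star x * x) := hx.star.mul hx
  have hst : star (Ring.inverse x) * star x = 1 := by
    rw [← star_mul, Ring.mul_inverse_cancel x hx, star_one]
  have key : (Ring.inverse x * star (Ring.inverse x)) * (star x * x) = 1 := by
    calc (Ring.inverse x * star (Ring.inverse x)) * (star x * x)
        = Ring.inverse x * ((star (Ring.inverse x) * star x) * x) := by
          simp only [mul_assoc]
    _ = Ring.inverse x * x := by rw [hst, one_mul]
    _ = 1 := Ring.inverse_mul_cancel x hx
  calc Ring.inverse (star x * x)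
      = ((Ring.inverse x * star (Ring.inverse x)) * (star x * x)) * Ring.inverse (star x * x) := by
        rw [key, one_mul]
  _ = (Ring.inverse x * star (Ring.inverse x)) * ((star x * x) * Ring.inverse (star x * x)) := by
        rw [mul_assoc]
  _ = Ring.inverse x * star (Ring.inverse x) := by
        rw [Ring.mul_inverse_cancel _ hu, mul_one]

lemma norm_inverse_eq_sqrt {B : Type*} [CStarAlgebra B] {x : B} (hx : IsUnit x) :
    ‖Ring.inverse x‖ = Real.sqrt ‖Ring.inverse (star x * x)‖ := by
  rw [inverse_star_mul hx, CStarRing.norm_self_mul_star,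
    Real.sqrt_mul_self (norm_nonneg _)]

section Evals

noncomputable def X0 : FreeAlgebra ℂ (Fin 2) := FreeAlgebra.ι ℂ (0 : Fin 2)
noncomputable def X1 : FreeAlgebra ℂ (Fin 2) := FreeAlgebra.ι ℂ (1 : Fin 2)

lemma heval {C : Type*} [CStarAlgebra C] (c : ℝ) (x : C) :
    FreeAlgebra.lift ℂ ![x, star x] (algebraMap ℂ (FreeAlgebra ℂ (Fin 2)) ((c : ℝ) : ℂ) - X1 * X0) =
      algebraMap ℝ C c - star x * x := by
  rw [map_sub, map_mul, AlgHom.commutes, X0, X1]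
  simp only [FreeAlgebra.lift_ι_apply, Matrix.cons_val_one, Matrix.head_cons,
    Matrix.cons_val_zero]
  rw [IsScalarTower.algebraMap_apply ℝ ℂ C c, Complex.coe_algebraMap]

lemma hevalR {C : Type*} [CStarAlgebra C] (c : ℝ) (x : C) :
    FreeAlgebra.lift ℂ ![x, star x] (algebraMap ℂ (FreeAlgebra ℂ (Fin 2)) ((c : ℝ) : ℂ) - X0 * X1) =
      algebraMap ℝ C c - x * star x := by
  rw [map_sub, map_mul, AlgHom.commutes, X0, X1]
  simp only [FreeAlgebra.lift_ι_apply, Matrix.cons_val_one, Matrix.head_cons,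
    Matrix.cons_val_zero]
  rw [IsScalarTower.algebraMap_apply ℝ ℂ C c, Complex.coe_algebraMap]

lemma hevalL {C : Type*} [CStarAlgebra C] (x : C) :
    FreeAlgebra.lift ℂ ![x, star x] (X1 * X0) = star x * x := by
  rw [map_mul, X0, X1]
  simp [FreeAlgebra.lift_ι_apply]

end Evals

/-- If `a⁽ⁿ⁾` converges to `a` in norm for all noncommutative `*`-polynomials in 2 variables
(elements of the free complex algebra on two generators, evaluated at `(a, a*)`), in the
setting of unital C⋆-algebras with faithful tracial states, and `a` is invertible, then
`a⁽ⁿ⁾` is invertible for all sufficiently large `n` and `‖(a⁽ⁿ⁾)⁻¹‖ → ‖a⁻¹‖`. -/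
theorem stmt6 {A : ℕ → Type*} [∀ n, CStarAlgebra (A n)] {B : Type*} [CStarAlgebra B]
    (τ' : ∀ n, A n → ℂ) (τ : B → ℂ)
    (hτ' : ∀ n, IsFaithfulTracialState (A n) (τ' n)) (hτ : IsFaithfulTracialState B τ)
    (a' : ∀ n, A n) (a : B)
    (hnorm : ∀ p : FreeAlgebra ℂ (Fin 2),
      Tendsto (fun n => ‖FreeAlgebra.lift ℂ ![a' n, star (a' n)] p‖) atTop
        (𝓝 ‖FreeAlgebra.lift ℂ ![a, star a] p‖))
    (ha : IsUnit a) :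
    (∀ᶠ n in atTop, IsUnit (a' n)) ∧
      Tendsto (fun n => ‖Ring.inverse (a' n)‖) atTop (𝓝 ‖Ring.inverse a‖) := by
  have h1lim : Tendsto (fun n => ‖(1 : A n)‖) atTop (𝓝 ‖(1 : B)‖) := by
    simpa using hnorm 1
  have hns : ∀ n, ‖(1 : A n)‖ < 1 → Subsingleton (A n) := by
    intro n h
    by_contra hns
    have : Nontrivial (A n) := not_subsingleton_iff_nontrivial.mp hns
    rw [CStarRing.norm_one] at h
    exact lt_irrefl 1 h
  cases subsingleton_or_nontrivial B with
  | inl hB =>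
    have hB1 : ‖(1 : B)‖ = 0 := by rw [Subsingleton.elim (1 : B) 0, norm_zero]
    have hsub : ∀ᶠ n in atTop, ‖(1 : A n)‖ < 1 :=
      h1lim.eventually_lt_const (by rw [hB1]; norm_num)
    refine ⟨hsub.mono fun n hn => ?_, ?_⟩
    · have := hns n hn
      exact isUnit_of_subsingleton _
    · have hRa : ‖Ring.inverse a‖ = 0 := by
        rw [Subsingleton.elim (Ring.inverse a) 0, norm_zero]
      rw [hRa]
      refine tendsto_const_nhds.congr' (hsub.mono fun n hn => ?_)
      have := hns n hn
      show (0 : ℝ) = ‖Ring.inverse (a' n)‖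
      rw [Subsingleton.elim (Ring.inverse (a' n)) 0, norm_zero]
  | inr hB =>
    -- eventual nontriviality
    have hev1 : ∀ᶠ n in atTop, (1/2 : ℝ) < ‖(1 : A n)‖ :=
      h1lim.eventually_const_lt (by rw [CStarRing.norm_one]; norm_num)
    set b : B := star a * a with hbdef
    have hbu : IsUnit b := ha.star.mul ha
    set c : ℝ := ‖b‖ + 1 with hcdef
    have hbc : ‖b‖ ≤ c := by rw [hcdef]; linarith
    have hkey := keyNorm (IsSelfAdjoint.star_mul_self a)
      (spectrum_star_mul_self_nonneg) hbu hbc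
    set m : ℝ := c - ‖algebraMap ℝ B c - b‖ with hmdef
    have hm0 : 0 < m := hkey.1
    -- the right-side element
    set bR : B := a * star a with hbRdef
    have hbRu : IsUnit bR := ha.mul ha.star
    have hbRc : ‖bR‖ ≤ c := by
      have : ‖bR‖ = ‖b‖ := by
        rw [hbRdef, hbdef, CStarRing.norm_self_mul_star, CStarRing.norm_star_mul_self]
      rw [this]; exact hbc
    have hbRnn : ∀ x ∈ spectrum ℝ bR, 0 ≤ x := by
      have := spectrum_star_mul_self_nonneg (b := star a) (A := B)
      simpa [star_star] using this
    have hkeyR := keyNorm (IsSelfAdjoint.mul_star_self a) hbRnn hbRu hbRc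
    set mR : ℝ := c - ‖algebraMap ℝ B c - bR‖ with hmRdef
    have hmR0 : 0 < mR := hkeyR.1
    -- limits
    have hlim1 : Tendsto (fun n => ‖algebraMap ℝ (A n) c - star (a' n) * a' n‖) atTop
        (𝓝 ‖algebraMap ℝ B c - b‖) := by
      have h := hnorm (algebraMap ℂ (FreeAlgebra ℂ (Fin 2)) ((c : ℝ) : ℂ) - X1 * X0)
      rw [heval c a] at h
      exact h.congr fun n => by rw [heval c (a' n)]
    have hlim2 : Tendsto (fun n => ‖algebraMap ℝ (A n) c - a' n * star (a' n)‖) atTop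
        (𝓝 ‖algebraMap ℝ B c - bR‖) := by
      have h := hnorm (algebraMap ℂ (FreeAlgebra ℂ (Fin 2)) ((c : ℝ) : ℂ) - X0 * X1)
      rw [hevalR c a] at h
      exact h.congr fun n => by rw [hevalR c (a' n)]
    have hlimL : Tendsto (fun n => ‖star (a' n) * a' n‖) atTop (𝓝 ‖b‖) := by
      have h := hnorm (X1 * X0)
      rw [hevalL a] at h
      exact h.congr fun n => by rw [hevalL (a' n)]
    have hev2 : ∀ᶠ n in atTop, ‖algebraMap ℝ (A n) c - star (a' n) * a' n‖ < c :=
      hlim1.eventually_lt_const (by rw [show ‖algebraMap ℝ B c - b‖ = c - m by rw [hmdef]; ring]; linarith)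
    have hev3 : ∀ᶠ n in atTop, ‖algebraMap ℝ (A n) c - a' n * star (a' n)‖ < c :=
      hlim2.eventually_lt_const (by rw [show ‖algebraMap ℝ B c - bR‖ = c - mR by rw [hmRdef]; ring]; linarith)
    have hev4 : ∀ᶠ n in atTop, ‖star (a' n) * a' n‖ ≤ c :=
      (hlimL.eventually_lt_const (by rw [hcdef]; linarith)).mono fun n hn => le_of_lt hn
    have hunit : ∀ᶠ n in atTop, IsUnit (a' n) :=
      (hev2.and hev3).mono fun n ⟨h2, h3⟩ => isUnit_of_star_parts (keyInv h2) (keyInv h3)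
    refine ⟨hunit, ?_⟩
    have heq : ∀ᶠ n in atTop,
        Real.sqrt ((c - ‖algebraMap ℝ (A n) c - star (a' n) * a' n‖)⁻¹) =
          ‖Ring.inverse (a' n)‖ := by
      filter_upwards [hev1, hev2, hev3, hev4] with n hn1 hn2 hn3 hn4
      have hntA : Nontrivial (A n) := by
        refine nontrivial_of_ne 1 0 fun h => ?_
        rw [h, norm_zero] at hn1
        norm_num at hn1
      have hu : IsUnit (a' n) := isUnit_of_star_parts (keyInv hn2) (keyInv hn3)
      have hk := keyNorm (IsSelfAdjoint.star_mul_self (a' n))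
        (spectrum_star_mul_self_nonneg) (hu.star.mul hu) hn4
      rw [norm_inverse_eq_sqrt hu, hk.2]
    have htend : Tendsto (fun n => Real.sqrt ((c - ‖algebraMap ℝ (A n) c - star (a' n) * a' n‖)⁻¹))
        atTop (𝓝 (Real.sqrt (m⁻¹))) := by
      have h1 : Tendsto (fun n => c - ‖algebraMap ℝ (A n) c - star (a' n) * a' n‖) atTop
          (𝓝 m) := by
        have h2 : Tendsto (fun n => c - ‖algebraMap ℝ (A n) c - star (a' n) * a' n‖) atTop
            (𝓝 (c - ‖algebraMap ℝ B c - b‖)) := (tendsto_const_nhds (α := ℕ)).sub hlim1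
        rwa [← hmdef] at h2
      exact (Real.continuous_sqrt.tendsto _).comp (h1.inv₀ hm0.ne')
    have hfin : ‖Ring.inverse a‖ = Real.sqrt (m⁻¹) := by
      rw [norm_inverse_eq_sqrt ha, ← hbdef, hkey.2]
    rw [hfin]
    exact htend.congr' heq
end

section
/- Let (𝒜⁽ⁿ⁾, τ⁽ⁿ⁾) for n ∈ ℕ and (𝒜, τ) be unital C*-algebras equipped with faithful tracial states. Let a⁽ⁿ⁾ ∈ 𝒜⁽ⁿ⁾ and a ∈ 𝒜 be such that for every noncommutative *-polynomial p in 2 variables, lim_{n→∞} ‖p(a⁽ⁿ⁾, (a⁽ⁿ⁾)*)‖ = ‖p(a, a*)‖ and lim_{n→∞} τ⁽ⁿ⁾(p(a⁽ⁿ⁾, (a⁽ⁿ⁾)*)) = τ(p(a, a*)). If a is invertible in 𝒜, then a⁽ⁿ⁾ is invertible in 𝒜⁽ⁿ⁾ for all sufficiently large n, and lim_{n→∞} τ⁽ⁿ⁾((a⁽ⁿ⁾)⁻¹) = τ(a⁻¹). -/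
open Filter Topology Set Polynomial
open scoped ComplexOrder InnerProductSpace

namespace PositiveLinearMap

variable {D : Type*} [CStarAlgebra D] [PartialOrder D] [StarOrderedRing D]

lemma norm_apply_le_norm_apply_one_mul (f : D →ₚ[ℂ] ℂ) (x : D) : ‖f x‖ ≤ ‖f 1‖ * ‖x‖ := by
  rcases subsingleton_or_nontrivial D with hD | hD
  · simp [Subsingleton.elim x 0]
  have hGNS (y : D) : ‖f.toPreGNS y‖ ≤ √‖f 1‖ * ‖y‖ := by
    rw [preGNS_norm_def, ← Real.sqrt_sq (norm_nonneg y), ← Real.sqrt_mul (norm_nonneg _)]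
    refine Real.sqrt_le_sqrt ((Complex.re_le_norm _).trans ?_)
    simpa [CStarRing.norm_star_mul_self, sq] using
      f.norm_apply_le_of_nonneg _ (star_mul_self_nonneg y)
  -- Cauchy–Schwarz for the GNS semi-inner product `⟪x, y⟫ = f (x⋆y)`, applied to `1` and `x`.
  calc ‖f x‖ = ‖⟪f.toPreGNS 1, f.toPreGNS x⟫_ℂ‖ := by simp [preGNS_inner_def]
    _ ≤ ‖f.toPreGNS 1‖ * ‖f.toPreGNS x‖ := norm_inner_le_norm _ _
    _ ≤ (√‖f 1‖ * ‖(1 : D)‖) * (√‖f 1‖ * ‖x‖) := by gcongr <;> exact hGNS _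
    _ = ‖f 1‖ * ‖x‖ := by
      rw [CStarRing.norm_one, mul_one, ← mul_assoc, Real.mul_self_sqrt (norm_nonneg _)]

end PositiveLinearMap

section Spectral

variable {D : Type*} [CStarAlgebra D]

lemma spectrum_subset_Icc_of_norm_algebraMap_sub_le {b : D} {c r : ℝ}
    (h : ‖algebraMap ℝ D c - b‖ ≤ r) : spectrum ℝ b ⊆ Icc (c - r) (c + r) := by
  nontriviality D using spectrum.of_subsingleton
  intro t ht
  have hmem : c - t ∈ spectrum ℝ (algebraMap ℝ D c - b) := by
    rw [← spectrum.singleton_sub_eq]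
    exact ⟨c, rfl, t, ht, rfl⟩
  have := (spectrum.norm_le_norm_of_mem hmem).trans h
  rw [Real.norm_eq_abs, abs_le] at this
  constructor <;> linarith

lemma IsSelfAdjoint.norm_algebraMap_sub_le {b : D} (hb : IsSelfAdjoint b) {c r : ℝ} (hr : 0 ≤ r)
    (h : spectrum ℝ b ⊆ Icc (c - r) (c + r)) : ‖algebraMap ℝ D c - b‖ ≤ r := by
  have hcfc : algebraMap ℝ D c - b = cfc (fun t : ℝ => c - t) b := by
    rw [cfc_sub (fun _ => c) (fun t => t) b, cfc_const c b, cfc_id' ℝ b]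
  rw [hcfc]
  refine norm_cfc_le hr fun t ht => ?_
  rw [Real.norm_eq_abs, abs_le]
  constructor <;> linarith [(h ht).1, (h ht).2]

lemma norm_ringInverse_sub_aeval_le {b : D} (hb : IsSelfAdjoint b) (hbu : IsUnit b) {q : ℝ[X]}
    {ε : ℝ} (hε : 0 ≤ ε) (hq : ∀ t ∈ spectrum ℝ b, |q.eval t - t⁻¹| ≤ ε) :
    ‖Ring.inverse b - aeval b q‖ ≤ ε := by
  have hne : ∀ t ∈ spectrum ℝ b, t ≠ 0 := fun t ht h0 =>
    spectrum.zero_notMem ℝ hbu (h0 ▸ ht)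
  rw [← cfc_ringInverse_id (R := ℝ) b hbu, ← cfc_polynomial q b,
    ← cfc_sub (fun t : ℝ => t⁻¹) (fun t => q.eval t) b (continuousOn_inv₀.mono hne)]
  refine norm_cfc_le hε fun t ht => ?_
  rw [Real.norm_eq_abs, abs_sub_comm]
  exact hq t ht

lemma exists_spectrum_star_mul_self_subset_Icc {a : D} (ha : IsUnit a) :
    ∃ s t : ℝ, 0 < s ∧ s ≤ t ∧ spectrum ℝ (star a * a) ⊆ Icc s t := by
  have hpos : ∀ u ∈ spectrum ℝ (star a * a), 0 < u := fun u hu =>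
    (spectrum_star_mul_self_nonneg u hu).lt_of_ne fun h0 =>
      spectrum.zero_notMem ℝ (ha.star.mul ha) (h0 ▸ hu)
  obtain ⟨s, hs, hsle⟩ := (spectrum.isCompact (star a * a)).exists_forall_le' continuousOn_id hpos
  obtain ⟨t, ht⟩ := (spectrum.isCompact (𝕜 := ℝ) (star a * a)).bddAbove
  exact ⟨s, max s t, hs, le_max_left s t, fun u hu => ⟨hsle u hu, (ht hu).trans (le_max_right s t)⟩⟩

end Spectral

lemma isUnit_of_isUnit_mul_of_isUnit_mul {M : Type*} [Monoid M] {x y z : M} (h₁ : IsUnit (y * x))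
    (h₂ : IsUnit (x * z)) : IsUnit x :=
  isUnit_iff_exists_and_exists.2
    ⟨⟨z * ↑h₂.unit⁻¹, by rw [← mul_assoc]; exact h₂.mul_val_inv⟩,
      ⟨↑h₁.unit⁻¹ * y, by rw [mul_assoc]; exact h₁.val_inv_mul⟩⟩

namespace IsFaithfulTracialState

variable {D : Type*} [CStarAlgebra D] {τ : D → ℂ}

def toLinearMap (hτ : IsFaithfulTracialState D τ) : D →ₗ[ℂ] ℂ where
  toFun := τ
  map_add' := hτ.map_add
  map_smul' := hτ.map_smul

@[simp]
lemma toLinearMap_apply (hτ : IsFaithfulTracialState D τ) (x : D) : hτ.toLinearMap x = τ x := rfl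

lemma map_nonneg [PartialOrder D] [StarOrderedRing D] (hτ : IsFaithfulTracialState D τ) {x : D}
    (hx : 0 ≤ x) : 0 ≤ τ x := by
  obtain ⟨s, rfl⟩ := CStarAlgebra.nonneg_iff_eq_star_mul_self.mp hx
  exact Complex.nonneg_iff.2 ⟨hτ.nonneg_re s, (hτ.im_eq_zero s).symm⟩

lemma norm_apply_le (hτ : IsFaithfulTracialState D τ) (x : D) : ‖τ x‖ ≤ ‖x‖ := by
  let := CStarAlgebra.spectralOrder D
  have := CStarAlgebra.spectralOrderedRing D
  have h : ‖τ x‖ ≤ ‖τ 1‖ * ‖x‖ :=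
    (PositiveLinearMap.mk₀ hτ.toLinearMap fun _ => hτ.map_nonneg).norm_apply_le_norm_apply_one_mul x
  simpa [hτ.map_one] using h

lemma dist_ringInverse_aeval_mul_star_le (hτ : IsFaithfulTracialState D τ) {x : D} (hx : IsUnit x)
    {q : ℝ[X]} {ε : ℝ} (hε : 0 ≤ ε) (hq : ∀ t ∈ spectrum ℝ (star x * x), |q.eval t - t⁻¹| ≤ ε) :
    dist (τ (Ring.inverse x)) (τ (aeval (star x * x) q * star x)) ≤ ε * ‖x‖ := by
  have hinv : Ring.inverse x = Ring.inverse (star x * x) * star x := by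
    rw [Ring.inverse_mul (Or.inl hx.star), mul_assoc, Ring.inverse_mul_cancel _ hx.star, mul_one]
  rw [dist_eq_norm, hinv, ← toLinearMap_apply hτ, ← toLinearMap_apply hτ, ← map_sub, ← sub_mul]
  calc _ ≤ ‖(Ring.inverse (star x * x) - aeval (star x * x) q) * star x‖ := hτ.norm_apply_le _
    _ ≤ ‖Ring.inverse (star x * x) - aeval (star x * x) q‖ * ‖star x‖ := norm_mul_le _ _
    _ ≤ ε * ‖x‖ := by
      rw [norm_star]
      gcongr
      exact norm_ringInverse_sub_aeval_le (.star_mul_self x) (hx.star.mul hx) hε hq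

end IsFaithfulTracialState

lemma tendsto_of_forall_exists_approx {ι X : Type*} [PseudoMetricSpace X] {l : Filter ι}
    {f : ι → X} {x : X}
    (h : ∀ ε > 0, ∃ g : ι → X, ∃ y, Tendsto g l (𝓝 y) ∧ (∀ᶠ i in l, dist (f i) (g i) ≤ ε) ∧
      dist y x ≤ ε) :
    Tendsto f l (𝓝 x) := by
  refine Metric.tendsto_nhds.2 fun ε hε => ?_
  obtain ⟨g, y, hg, hfg, hyx⟩ := h (ε / 4) (by positivity)
  filter_upwards [hfg, Metric.tendsto_nhds.1 hg (ε / 4) (by positivity)] with i hfgi hgi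
  calc dist (f i) x ≤ dist (f i) (g i) + dist (g i) y + dist y x := dist_triangle4 _ _ _ _
    _ < ε := by linarith

section Convergence

variable {ι B : Type*} {l : Filter ι} {A : ι → Type*} [∀ i, CStarAlgebra (A i)] [CStarAlgebra B]

lemma eventually_spectrum_subset_Icc {b : ∀ i, A i} {b₀ : B} (hb₀ : IsSelfAdjoint b₀)
    (hnorm : ∀ c : ℝ,
      Tendsto (fun i => ‖algebraMap ℝ (A i) c - b i‖) l (𝓝 ‖algebraMap ℝ B c - b₀‖))
    {s t s' t' : ℝ} (hst : s ≤ t) (hσ : spectrum ℝ b₀ ⊆ Icc s t) (hs' : s' < s) (ht' : t < t') :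
    ∀ᶠ i in l, spectrum ℝ (b i) ⊆ Icc s' t' := by
  obtain ⟨ε, hε, hεs, hεt⟩ : ∃ ε > 0, ε ≤ s - s' ∧ ε ≤ t' - t :=
    ⟨min (s - s') (t' - t), lt_min (by linarith) (by linarith), min_le_left _ _, min_le_right _ _⟩
  have hb₀ : ‖algebraMap ℝ B ((s + t) / 2) - b₀‖ ≤ (t - s) / 2 :=
    hb₀.norm_algebraMap_sub_le (by linarith) (by convert hσ using 2 <;> ring)
  filter_upwards [(hnorm ((s + t) / 2)).eventually_lt_const
    (show _ < (t - s) / 2 + ε by linarith)] with i hi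
  exact (spectrum_subset_Icc_of_norm_algebraMap_sub_le hi.le).trans
    (Icc_subset_Icc (by linarith) (by linarith))

lemma exists_eventually_spectrum_star_mul_self_subset_Icc {a' : ∀ i, A i} {a : B}
    (ha : IsUnit a)
    (hnorm : ∀ c : ℝ, Tendsto (fun i => ‖algebraMap ℝ (A i) c - star (a' i) * a' i‖) l
      (𝓝 ‖algebraMap ℝ B c - star a * a‖)) :
    ∃ s t : ℝ, 0 < s ∧ spectrum ℝ (star a * a) ⊆ Icc s t ∧
      ∀ᶠ i in l, spectrum ℝ (star (a' i) * a' i) ⊆ Icc s t := by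
  obtain ⟨s, t, hs, hst, hσ⟩ := exists_spectrum_star_mul_self_subset_Icc ha
  exact ⟨s / 2, t + 1, half_pos hs, hσ.trans (Icc_subset_Icc (half_le_self hs.le) (by linarith)),
    eventually_spectrum_subset_Icc (.star_mul_self a) hnorm hst hσ (half_lt_self hs)
      (lt_add_one t)⟩

lemma tendsto_apply_ringInverse {τ' : ∀ i, A i → ℂ} {τ : B → ℂ}
    (hτ' : ∀ i, IsFaithfulTracialState (A i) (τ' i)) (hτ : IsFaithfulTracialState B τ)
    {a' : ∀ i, A i} {a : B} (ha' : ∀ᶠ i in l, IsUnit (a' i)) (ha : IsUnit a) {s t K : ℝ}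
    (hs : 0 < s) (hσ' : ∀ᶠ i in l, spectrum ℝ (star (a' i) * a' i) ⊆ Icc s t)
    (hσ : spectrum ℝ (star a * a) ⊆ Icc s t) (hK' : ∀ᶠ i in l, ‖a' i‖ ≤ K) (hK : ‖a‖ ≤ K)
    (htr : ∀ q : ℝ[X], Tendsto (fun i => τ' i (aeval (star (a' i) * a' i) q * star (a' i))) l
      (𝓝 (τ (aeval (star a * a) q * star a)))) :
    Tendsto (fun i => τ' i (Ring.inverse (a' i))) l (𝓝 (τ (Ring.inverse a))) := by
  refine tendsto_of_forall_exists_approx fun ε hε => ?_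
  have hK₀ : 0 < K + 1 := by linarith [(norm_nonneg a).trans hK]
  obtain ⟨q, hq⟩ := exists_polynomial_near_of_continuousOn s t (fun u => u⁻¹)
    (continuousOn_inv₀.mono fun u hu => (hs.trans_le hu.1).ne') (ε / (K + 1)) (by positivity)
  have hqσ {σ : Set ℝ} (h : σ ⊆ Icc s t) : ∀ u ∈ σ, |q.eval u - u⁻¹| ≤ ε / (K + 1) :=
    fun u hu => (hq u (h hu)).le
  have hε_mul {x : ℝ} (hx : x ≤ K) : ε / (K + 1) * x ≤ ε := by
    rw [div_mul_eq_mul_div, div_le_iff₀ hK₀]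
    nlinarith
  refine ⟨_, _, htr q, ?_, ?_⟩
  · filter_upwards [ha', hσ', hK'] with i hui hσi hKi
    exact ((hτ' i).dist_ringInverse_aeval_mul_star_le hui (by positivity) (hqσ hσi)).trans
      (hε_mul hKi)
  · rw [dist_comm]
    exact (hτ.dist_ringInverse_aeval_mul_star_le ha (by positivity) (hqσ hσ)).trans (hε_mul hK)

end Convergence

/-- If `a⁽ⁿ⁾` converges to `a` in norm and in trace for all noncommutative `*`-polynomials
in 2 variables, in the setting of unital C⋆-algebras with faithful tracial states, and `a`
is invertible, then `a⁽ⁿ⁾` is invertible for all sufficiently large `n` and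
`τ⁽ⁿ⁾((a⁽ⁿ⁾)⁻¹) → τ(a⁻¹)`. -/
theorem stmt12 {A : ℕ → Type*} [∀ n, CStarAlgebra (A n)] {B : Type*} [CStarAlgebra B]
    (τ' : ∀ n, A n → ℂ) (τ : B → ℂ)
    (hτ' : ∀ n, IsFaithfulTracialState (A n) (τ' n)) (hτ : IsFaithfulTracialState B τ)
    (a' : ∀ n, A n) (a : B)
    (hnorm : ∀ p : FreeAlgebra ℂ (Fin 2),
      Tendsto (fun n => ‖FreeAlgebra.lift ℂ ![a' n, star (a' n)] p‖) atTop
        (𝓝 ‖FreeAlgebra.lift ℂ ![a, star a] p‖))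
    (htr : ∀ p : FreeAlgebra ℂ (Fin 2),
      Tendsto (fun n => τ' n (FreeAlgebra.lift ℂ ![a' n, star (a' n)] p)) atTop
        (𝓝 (τ (FreeAlgebra.lift ℂ ![a, star a] p))))
    (ha : IsUnit a) :
    (∀ᶠ n in atTop, IsUnit (a' n)) ∧
      Tendsto (fun n => τ' n (Ring.inverse (a' n))) atTop (𝓝 (τ (Ring.inverse a))) := by
  let ξ : Fin 2 → FreeAlgebra ℂ (Fin 2) := FreeAlgebra.ι ℂ
  have htr' (q : ℝ[X]) : Tendsto (fun n => τ' n (aeval (star (a' n) * a' n) q * star (a' n)))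
      atTop (𝓝 (τ (aeval (star a * a) q * star a))) := by
    have h := htr (aeval (ξ 1 * ξ 0) (q.map (algebraMap ℝ ℂ)) * ξ 1)
    simp only [map_mul, ← aeval_algHom_apply] at h
    simpa [ξ] using h
  have hbdd : ∀ᶠ n in atTop, ‖a' n‖ ≤ ‖a‖ + 1 := by
    have h := hnorm (ξ 0)
    simp only [ξ, FreeAlgebra.lift_ι_apply] at h
    exact (h.eventually_lt_const (lt_add_one _)).mono fun n hn => hn.le
  obtain ⟨s, t, hs, hσ, hσn⟩ := exists_eventually_spectrum_star_mul_self_subset_Icc ha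
    fun c => by simpa [ξ] using hnorm (algebraMap ℝ _ c - ξ 1 * ξ 0)
  obtain ⟨s', t', hs', -, hσn'⟩ := exists_eventually_spectrum_star_mul_self_subset_Icc
    (a' := fun n => star (a' n)) ha.star
    fun c => by simpa [ξ] using hnorm (algebraMap ℝ _ c - ξ 0 * ξ 1)
  have hunit : ∀ᶠ n in atTop, IsUnit (a' n) := by
    filter_upwards [hσn, hσn'] with n h h'
    rw [star_star] at h'
    exact isUnit_of_isUnit_mul_of_isUnit_mul
      ((spectrum.zero_notMem_iff ℝ).1 fun h0 => (h h0).1.not_gt hs)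
      ((spectrum.zero_notMem_iff ℝ).1 fun h0 => (h' h0).1.not_gt hs')
  exact ⟨hunit, tendsto_apply_ringInverse hτ' hτ hunit ha hs hσn hσ hbdd (lt_add_one _).le htr'⟩
end
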